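/- arXiv:1707.06863 — 7 statements merged into one kernel-verified Lean document; each statement's English description precedes it below -/
import Mathlib

section
/- Every variety of lines X in ℙ¹×ℙ¹×ℙ¹ has the Hyp_n(⋆)-property for every n > 6. -/
/-- A variety of lines in `ℙ¹×ℙ¹×ℙ¹` is modeled by a graph `G` on the hyperplanes,
colored by their three types; `X` has the `Hyp_n(⋆)`-property if for any `n` (distinct)
cyclically ordered hyperplanes `H₁, …, Hₙ` such that `L(H_i, H_j) ∈ X` for every
`j ∉ {i-1, i, i+1}` (indices mod `n`), some consecutive pair spans a line of `X`. -/
def HypStar {V : Type*} (G : SimpleGraph V) (n : ℕ) : Prop :=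
  ∀ H : ZMod n → V, Function.Injective H →
    (∀ i j : ZMod n, j ≠ i - 1 → j ≠ i → j ≠ i + 1 → G.Adj (H i) (H j)) →
    ∃ u : ZMod n, G.Adj (H u) (H (u + 1))

/-- The graph is tripartite: its vertices (the hyperplanes) have one of three types,
and edges (lines of `X`) only join hyperplanes of distinct types. -/
def TripartiteGraph {V : Type*} (G : SimpleGraph V) (col : V → Fin 3) : Prop :=
  ∀ u v : V, G.Adj u v → col u ≠ col v

/-!
Among `n > 6` hyperplanes coloured by three types, three share a type. Hyperplanes of one
type never span a line of `X`, so under the hypothesis of `Hyp_n(⋆)` any two of the three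
must be cyclically consecutive. But three distinct positions on a cycle of length `n > 3`
cannot be pairwise consecutive.
-/

theorem eq_of_pairwise_sub_one_or_add_one {R : Type*} [CommRing R] (h3 : (3 : R) ≠ 0)
    {a b c : R} (hab : b = a - 1 ∨ b = a + 1) (hac : c = a - 1 ∨ c = a + 1)
    (hbc : c = b - 1 ∨ c = b + 1) : b = c := by
  -- the non-degenerate cases force `1 = 0` or `3 = 0`; the former makes `R` trivial
  rcases hab with rfl | rfl <;> rcases hac with rfl | rfl <;> rcases hbc with h | h
  all_goals first
    | rfl
    | exact (h3 (by linear_combination h)).elim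
    | exact (h3 (by linear_combination -h)).elim
    | linear_combination (a + 1 - (a - 1)) * h
    | linear_combination -(a + 1 - (a - 1)) * h

theorem ZMod.three_ne_zero {n : ℕ} (hn : 3 < n) : (3 : ZMod n) ≠ 0 := by
  intro h
  have h' : ((3 : ℕ) : ZMod n) = 0 := by exact_mod_cast h
  rw [ZMod.natCast_eq_zero_iff] at h'
  have := Nat.le_of_dvd three_pos h'
  omega

theorem exists_three_distinct_eq_of_six_lt_card {α : Type*} [Fintype α] (f : α → Fin 3)
    (h : 6 < Fintype.card α) :
    ∃ a b c : α, a ≠ b ∧ a ≠ c ∧ b ≠ c ∧ f a = f b ∧ f a = f c := by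
  obtain ⟨y, hy⟩ := Fintype.exists_lt_card_fiber_of_mul_lt_card (n := 2) f (by simpa using h)
  obtain ⟨a, ha, b, hb, c, hc, hab, hac, hbc⟩ := Finset.two_lt_card.mp hy
  simp only [Finset.mem_filter, Finset.mem_univ, true_and] at ha hb hc
  exact ⟨a, b, c, hab, hac, hbc, ha.trans hb.symm, ha.trans hc.symm⟩

theorem TripartiteGraph.eq_sub_one_or_eq_add_one {V R : Type*} [Ring R] {G : SimpleGraph V}
    {col : V → Fin 3} (hG : TripartiteGraph G col) {H : R → V}
    (hadj : ∀ i j : R, j ≠ i - 1 → j ≠ i → j ≠ i + 1 → G.Adj (H i) (H j))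
    {i j : R} (hij : i ≠ j) (hcol : col (H i) = col (H j)) : j = i - 1 ∨ j = i + 1 := by
  by_contra! h
  exact hG _ _ (hadj i j h.1 hij.symm h.2) hcol

/-- Every variety of lines `X` in `ℙ¹×ℙ¹×ℙ¹` has the
`Hyp_n(⋆)`-property for every `n > 6`. -/
theorem hypStar_of_six_lt {V : Type*} (G : SimpleGraph V) (col : V → Fin 3)
    (hG : TripartiteGraph G col) (n : ℕ) (hn : 6 < n) : HypStar G n := by
  intro H _ hadj
  have : NeZero n := ⟨by omega⟩
  obtain ⟨a, b, c, hab, hac, hbc, hcab, hcac⟩ :=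
    exists_three_distinct_eq_of_six_lt_card (col ∘ H) (by rwa [ZMod.card])
  have neighbor := fun {i j} => hG.eq_sub_one_or_eq_add_one hadj (i := i) (j := j)
  exact absurd (eq_of_pairwise_sub_one_or_add_one (ZMod.three_ne_zero (by omega))
    (neighbor hab hcab) (neighbor hac hcac) (neighbor hbc (hcab.symm.trans hcac))) hbc
end

section
/- A tripartite graph G has the property that its complement G^c is chordal if and only if G satisfies the Hyp_n(⋆)-property for n = 4, 5, 6 (where Hyp_n(⋆) means: for any cyclically ordered vertices v₁,…,v_n with {v_i,v_j} ∈ E(G) for all j ∉ {i−1,i,i+1} mod n, some {v_u,v_{u+1}} ∈ E(G)). -/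
/-- A graph is chordal if every (injective) cycle of length at least `4` has a chord. -/
def ChordalGraph {V : Type*} (G : SimpleGraph V) : Prop :=
  ∀ n : ℕ, 4 ≤ n → ∀ v : ZMod n → V, Function.Injective v →
    (∀ i : ZMod n, G.Adj (v i) (v (i + 1))) →
    ∃ i j : ZMod n, j ≠ i - 1 ∧ j ≠ i ∧ j ≠ i + 1 ∧ G.Adj (v i) (v j)

namespace ZMod

variable {n : ℕ}

theorem natCast_ne_zero_of_pos_of_lt {m : ℕ} (hm : 0 < m) (hmn : m < n) : (m : ZMod n) ≠ 0 := by
  rw [Ne, ZMod.natCast_eq_zero_iff]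
  exact fun h => absurd (Nat.le_of_dvd hm h) (by omega)

theorem not_pairwise_consecutive_three (hn : 4 ≤ n) {a b c : ZMod n}
    (hab : b = a - 1 ∨ b = a + 1) (hac : c = a - 1 ∨ c = a + 1) (hbc : c = b - 1 ∨ c = b + 1)
    (hb_ne_c : b ≠ c) : False := by
  have one_ne : ((1 : ℕ) : ZMod n) ≠ 0 := natCast_ne_zero_of_pos_of_lt one_pos (by omega)
  have three_ne : ((3 : ℕ) : ZMod n) ≠ 0 := natCast_ne_zero_of_pos_of_lt three_pos (by omega)
  push_cast at one_ne three_ne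
  rcases hab with rfl | rfl <;> rcases hac with rfl | rfl
  · exact hb_ne_c rfl
  · rcases hbc with h | h
    · exact three_ne (by linear_combination h)
    · exact one_ne (by linear_combination h)
  · rcases hbc with h | h
    · exact one_ne (by linear_combination -h)
    · exact three_ne (by linear_combination -h)
  · exact hb_ne_c rfl

theorem exists_nonconsecutive_eq {α : Type*} [Fintype α] (f : ZMod n → α) (hn : 4 ≤ n)
    (hcard : Fintype.card α * 2 < n) :
    ∃ i j : ZMod n, j ≠ i - 1 ∧ j ≠ i ∧ j ≠ i + 1 ∧ f i = f j := by
  classical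
  have : NeZero n := ⟨by omega⟩
  obtain ⟨y, hy⟩ := Fintype.exists_lt_card_fiber_of_mul_lt_card f (by rwa [ZMod.card])
  obtain ⟨a, ha, b, hb, c, hc, hab, hac, hbc⟩ := Finset.two_lt_card.mp hy
  simp only [Finset.mem_filter, Finset.mem_univ, true_and] at ha hb hc
  by_contra! hfar
  have consecutive {i j : ZMod n} (hij : i ≠ j) (hf : f i = f j) : j = i - 1 ∨ j = i + 1 := by
    by_contra! h
    exact hfar i j h.1 hij.symm h.2 hf
  exact not_pairwise_consecutive_three hn (consecutive hab (ha.trans hb.symm))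
    (consecutive hac (ha.trans hc.symm)) (consecutive hbc (hb.trans hc.symm)) hbc

end ZMod

namespace SimpleGraph

variable {V : Type*} (G : SimpleGraph V)

def EveryCycleHasChord (n : ℕ) : Prop :=
  ∀ v : ZMod n → V, Function.Injective v → (∀ i : ZMod n, G.Adj (v i) (v (i + 1))) →
    ∃ i j : ZMod n, j ≠ i - 1 ∧ j ≠ i ∧ j ≠ i + 1 ∧ G.Adj (v i) (v j)

theorem chordalGraph_iff_forall_everyCycleHasChord :
    ChordalGraph G ↔ ∀ n : ℕ, 4 ≤ n → G.EveryCycleHasChord n :=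
  Iff.rfl

theorem hypStar_iff_everyCycleHasChord_compl {n : ℕ} (hn : 1 < n) :
    HypStar G n ↔ Gᶜ.EveryCycleHasChord n := by
  have : Fact (1 < n) := ⟨hn⟩
  have ne_succ {v : ZMod n → V} (hv : Function.Injective v) (i : ZMod n) : v i ≠ v (i + 1) :=
    hv.ne (by simp)
  constructor
  · intro hyp v hv hcycle
    by_contra! hno_chord
    have hadj (i j : ZMod n) (h₁ : j ≠ i - 1) (h₂ : j ≠ i) (h₃ : j ≠ i + 1) : G.Adj (v i) (v j) :=
      not_not.mp fun h => hno_chord i j h₁ h₂ h₃ ⟨hv.ne h₂.symm, h⟩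
    obtain ⟨u, hu⟩ := hyp v hv hadj
    exact (hcycle u).2 hu
  · intro hchord H hH hadj
    by_contra! hno_edge
    obtain ⟨i, j, h₁, h₂, h₃, hij⟩ :=
      hchord H hH fun i => ⟨ne_succ hH i, hno_edge i⟩
    exact hij.2 (hadj i j h₁ h₂ h₃)

theorem everyCycleHasChord_compl_of_tripartite {col : V → Fin 3} (hG : TripartiteGraph G col)
    {n : ℕ} (hn : 7 ≤ n) : Gᶜ.EveryCycleHasChord n := by
  intro v hv _
  obtain ⟨i, j, h₁, h₂, h₃, hcol⟩ :=
    ZMod.exists_nonconsecutive_eq (col ∘ v) (by omega) (by rw [Fintype.card_fin]; omega)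
  exact ⟨i, j, h₁, h₂, h₃, hv.ne h₂.symm, fun hadj => hG _ _ hadj hcol⟩

end SimpleGraph

/-- for a tripartite graph `G`, the complement `Gᶜ` is chordal iff
`G` has the `Hyp_n(⋆)`-property for `n = 4, 5, 6`. -/
theorem complement_chordal_iff_hypStar {V : Type*} (G : SimpleGraph V) (col : V → Fin 3)
    (hG : TripartiteGraph G col) :
    ChordalGraph Gᶜ ↔ (HypStar G 4 ∧ HypStar G 5 ∧ HypStar G 6) := by
  simp only [SimpleGraph.chordalGraph_iff_forall_everyCycleHasChord,
    G.hypStar_iff_everyCycleHasChord_compl (by norm_num : 1 < 4),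
    G.hypStar_iff_everyCycleHasChord_compl (by norm_num : 1 < 5),
    G.hypStar_iff_everyCycleHasChord_compl (by norm_num : 1 < 6)]
  refine ⟨fun h => ⟨h 4 le_rfl, h 5 (by norm_num), h 6 (by norm_num)⟩, ?_⟩
  rintro ⟨h4, h5, h6⟩ n hn
  rcases (by omega : n = 4 ∨ n = 5 ∨ n = 6 ∨ 7 ≤ n) with rfl | rfl | rfl | h7
  · exact h4
  · exact h5
  · exact h6
  · exact G.everyCycleHasChord_compl_of_tripartite hG h7
end

section
/- Let X be a variety of lines in ℙ¹×ℙ¹×ℙ¹, modeled as a tripartite graph G_X on vertex sets {a₁,…,a_{d₁}}, {b₁,…,b_{d₂}}, {c₁,…,c_{d₃}}. Define multiplicities μ_{ijk} = number of edges among {a_i b_j, a_i c_k, b_j c_k} present in G_X. Then X fails the Hyp₆(⋆)-property if and only if there exist indices a₁,a₂ ∈ [d₁], b₁,b₂ ∈ [d₂], c₁,c₂ ∈ [d₃] such that the 2×2 matrix (μ_{a_r b_s c₁})_{r,s} equals [[3,2],[2,2]] and (μ_{a_r b_s c₂})_{r,s} equals [[2,2],[2,3]]. -/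
/-- The tripartite graph `G_X` of a variety of lines `X`, built from the incidence data
`Eab i j ↔ L(A_i,B_j) ∈ X`, `Eac i k ↔ L(A_i,C_k) ∈ X`, `Ebc j k ↔ L(B_j,C_k) ∈ X`. -/
def lineGraph {d₁ d₂ d₃ : ℕ} (Eab : Fin d₁ → Fin d₂ → Bool) (Eac : Fin d₁ → Fin d₃ → Bool)
    (Ebc : Fin d₂ → Fin d₃ → Bool) : SimpleGraph (Fin d₁ ⊕ Fin d₂ ⊕ Fin d₃) :=
  SimpleGraph.fromRel fun x y =>
    match x, y with
    | Sum.inl i, Sum.inr (Sum.inl j) => Eab i j = true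
    | Sum.inl i, Sum.inr (Sum.inr k) => Eac i k = true
    | Sum.inr (Sum.inl j), Sum.inr (Sum.inr k) => Ebc j k = true
    | _, _ => False

/-- The multiplicity `μ_{ijk}` of the point `P_{ijk}`: the number of lines of `X`
passing through it, i.e. the number of edges of the triangle `{a_i, b_j, c_k}`
present in `G_X`. -/
def mu {d₁ d₂ d₃ : ℕ} (Eab : Fin d₁ → Fin d₂ → Bool) (Eac : Fin d₁ → Fin d₃ → Bool)
    (Ebc : Fin d₂ → Fin d₃ → Bool) (i : Fin d₁) (j : Fin d₂) (k : Fin d₃) : ℕ :=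
  (cond (Eab i j) 1 0) + (cond (Eac i k) 1 0) + (cond (Ebc j k) 1 0)


/-!
A failure of `Hyp₆(⋆)` is a set of six distinct vertices inducing the complement of a hexagon
`v₀v₁…v₅`: two triangles `v₀v₂v₄`, `v₁v₃v₅` joined by the matching `v₀v₃, v₁v₄, v₂v₅`. In the
tripartite graph `G_X` every triangle meets each part once and opposite vertices lie in different
parts, so consecutive vertices pair up inside the parts; after a symmetry of the hexagon the six
vertices are `a₁, a₂, b₁, b₂, c₁, c₂` in this order. Reading off the edges, such a hexagon has
multiplicity 3 on its two triangles and 2 on the six other points of the `2 × 2 × 2` box.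
Conversely these eight multiplicities leave exactly two possibilities, decided by whether `a₁b₂`
is an edge: the hexagon `a₁, a₂, b₁, b₂, c₁, c₂` or the hexagon `a₂, a₁, b₂, b₁, c₂, c₁`.
-/

namespace SimpleGraph

variable {V : Type*} (G : SimpleGraph V)

/-- `v₀, …, v₅` induce the complement of the hexagon `v₀v₁v₂v₃v₄v₅`. -/
def IsAntiHexagon (v₀ v₁ v₂ v₃ v₄ v₅ : V) : Prop :=
  (v₀ ≠ v₁ ∧ v₁ ≠ v₂ ∧ v₂ ≠ v₃ ∧ v₃ ≠ v₄ ∧ v₄ ≠ v₅ ∧ v₅ ≠ v₀) ∧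
  (¬G.Adj v₀ v₁ ∧ ¬G.Adj v₁ v₂ ∧ ¬G.Adj v₂ v₃ ∧ ¬G.Adj v₃ v₄ ∧ ¬G.Adj v₄ v₅ ∧ ¬G.Adj v₅ v₀) ∧
  (G.Adj v₀ v₂ ∧ G.Adj v₂ v₄ ∧ G.Adj v₄ v₀) ∧ (G.Adj v₁ v₃ ∧ G.Adj v₃ v₅ ∧ G.Adj v₅ v₁) ∧
  (G.Adj v₀ v₃ ∧ G.Adj v₁ v₄ ∧ G.Adj v₂ v₅)

variable {G} {v₀ v₁ v₂ v₃ v₄ v₅ : V}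

theorem IsAntiHexagon.rotate (h : G.IsAntiHexagon v₀ v₁ v₂ v₃ v₄ v₅) :
    G.IsAntiHexagon v₁ v₂ v₃ v₄ v₅ v₀ := by
  simp only [IsAntiHexagon, G.adj_comm v₃ v₀] at h ⊢
  tauto

theorem IsAntiHexagon.reflect (h : G.IsAntiHexagon v₀ v₁ v₂ v₃ v₄ v₅) :
    G.IsAntiHexagon v₁ v₀ v₅ v₄ v₃ v₂ := by
  simp only [IsAntiHexagon, ne_comm, G.adj_comm] at h ⊢
  tauto

theorem not_hypStar_six_iff :
    ¬HypStar G 6 ↔ ∃ v₀ v₁ v₂ v₃ v₄ v₅, G.IsAntiHexagon v₀ v₁ v₂ v₃ v₄ v₅ := by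
  simp only [HypStar, not_forall, not_exists, exists_prop]
  constructor
  · rintro ⟨H, hinj, hadj, hnadj⟩
    have hfar : ∀ i j : ZMod 6, j - i ∈ ({2, 3, 4} : Finset _) →
        j ≠ i - 1 ∧ j ≠ i ∧ j ≠ i + 1 := by
      decide
    have hadj_far (i j : ZMod 6) (hj : j - i ∈ ({2, 3, 4} : Finset _)) : G.Adj (H i) (H j) :=
      have ⟨h₁, h₂, h₃⟩ := hfar i j hj
      hadj i j h₁ h₂ h₃
    exact ⟨H 0, H 1, H 2, H 3, H 4, H 5,
      ⟨hinj.ne (by decide), hinj.ne (by decide), hinj.ne (by decide), hinj.ne (by decide),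
        hinj.ne (by decide), hinj.ne (by decide)⟩,
      ⟨hnadj 0, hnadj 1, hnadj 2, hnadj 3, hnadj 4, hnadj 5⟩,
      ⟨hadj_far 0 2 (by decide), hadj_far 2 4 (by decide), hadj_far 4 0 (by decide)⟩,
      ⟨hadj_far 1 3 (by decide), hadj_far 3 5 (by decide), hadj_far 5 1 (by decide)⟩,
      ⟨hadj_far 0 3 (by decide), hadj_far 1 4 (by decide), hadj_far 2 5 (by decide)⟩⟩
  · rintro ⟨v₀, v₁, v₂, v₃, v₄, v₅, hne, ⟨n₀, n₁, n₂, n₃, n₄, n₅⟩, ⟨a₀₂, a₂₄, a₄₀⟩,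
      ⟨a₁₃, a₃₅, a₅₁⟩, ⟨a₀₃, a₁₄, a₂₅⟩⟩
    have cases6 : ∀ i : ZMod 6, i = 0 ∨ i = 1 ∨ i = 2 ∨ i = 3 ∨ i = 4 ∨ i = 5 := by decide
    refine ⟨![v₀, v₁, v₂, v₃, v₄, v₅], ?_, ?_, fun u => ?_⟩
    · intro i j hij
      rcases cases6 i with rfl | rfl | rfl | rfl | rfl | rfl <;>
        rcases cases6 j with rfl | rfl | rfl | rfl | rfl | rfl <;>
        simp_all [a₀₂.ne, a₂₄.ne, a₄₀.ne, a₁₃.ne, a₃₅.ne, a₅₁.ne, a₀₃.ne, a₁₄.ne, a₂₅.ne,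
          a₀₂.ne', a₂₄.ne', a₄₀.ne', a₁₃.ne', a₃₅.ne', a₅₁.ne', a₀₃.ne', a₁₄.ne', a₂₅.ne', eq_comm]
    · intro i j
      rcases cases6 i with rfl | rfl | rfl | rfl | rfl | rfl <;>
        rcases cases6 j with rfl | rfl | rfl | rfl | rfl | rfl <;>
        simp +decide [a₀₂, a₂₄, a₄₀, a₁₃, a₃₅, a₅₁, a₀₃, a₁₄, a₂₅, a₀₂.symm, a₂₄.symm, a₄₀.symm,
          a₁₃.symm, a₃₅.symm, a₅₁.symm, a₀₃.symm, a₁₄.symm, a₂₅.symm]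
    · rcases cases6 u with rfl | rfl | rfl | rfl | rfl | rfl
      exacts [n₀, n₁, n₂, n₃, n₄, n₅]

end SimpleGraph

section LineGraph

open Sum

variable {d₁ d₂ d₃ : ℕ} {Eab : Fin d₁ → Fin d₂ → Bool} {Eac : Fin d₁ → Fin d₃ → Bool}
  {Ebc : Fin d₂ → Fin d₃ → Bool}

def lineGraphPart : Fin d₁ ⊕ Fin d₂ ⊕ Fin d₃ → Fin 3 :=
  Sum.elim (fun _ => 0) (Sum.elim (fun _ => 1) fun _ => 2)

theorem lineGraphPart_eq_zero_iff {v : Fin d₁ ⊕ Fin d₂ ⊕ Fin d₃} :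
    lineGraphPart v = 0 ↔ ∃ a, v = inl a := by
  rcases v with _ | _ | _ <;> simp [lineGraphPart]

theorem lineGraphPart_eq_one_iff {v : Fin d₁ ⊕ Fin d₂ ⊕ Fin d₃} :
    lineGraphPart v = 1 ↔ ∃ b, v = inr (inl b) := by
  rcases v with _ | _ | _ <;> simp [lineGraphPart]

theorem lineGraphPart_eq_two_iff {v : Fin d₁ ⊕ Fin d₂ ⊕ Fin d₃} :
    lineGraphPart v = 2 ↔ ∃ c, v = inr (inr c) := by
  rcases v with _ | _ | _ <;> simp [lineGraphPart]

theorem lineGraphPart_ne_of_adj {u v : Fin d₁ ⊕ Fin d₂ ⊕ Fin d₃}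
    (h : (lineGraph Eab Eac Ebc).Adj u v) : lineGraphPart u ≠ lineGraphPart v := by
  rcases u with _ | _ | _ <;> rcases v with _ | _ | _ <;> simp_all [lineGraph, lineGraphPart]

theorem lineGraphPart_ne_of_isAntiHexagon {v₀ v₁ v₂ v₃ v₄ v₅ : Fin d₁ ⊕ Fin d₂ ⊕ Fin d₃}
    (h : (lineGraph Eab Eac Ebc).IsAntiHexagon v₀ v₁ v₂ v₃ v₄ v₅) :
    lineGraphPart v₀ ≠ lineGraphPart v₂ ∧ lineGraphPart v₂ ≠ lineGraphPart v₄ ∧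
      lineGraphPart v₄ ≠ lineGraphPart v₀ ∧ lineGraphPart v₁ ≠ lineGraphPart v₃ ∧
      lineGraphPart v₃ ≠ lineGraphPart v₅ ∧ lineGraphPart v₅ ≠ lineGraphPart v₁ ∧
      lineGraphPart v₀ ≠ lineGraphPart v₃ ∧ lineGraphPart v₁ ≠ lineGraphPart v₄ ∧
      lineGraphPart v₂ ≠ lineGraphPart v₅ := by
  obtain ⟨-, -, ⟨h₀₂, h₂₄, h₄₀⟩, ⟨h₁₃, h₃₅, h₅₁⟩, ⟨h₀₃, h₁₄, h₂₅⟩⟩ := h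
  exact ⟨lineGraphPart_ne_of_adj h₀₂, lineGraphPart_ne_of_adj h₂₄, lineGraphPart_ne_of_adj h₄₀,
    lineGraphPart_ne_of_adj h₁₃, lineGraphPart_ne_of_adj h₃₅, lineGraphPart_ne_of_adj h₅₁,
    lineGraphPart_ne_of_adj h₀₃, lineGraphPart_ne_of_adj h₁₄, lineGraphPart_ne_of_adj h₂₅⟩

theorem exists_isAntiHexagon_inl_inl {v₀ v₁ v₂ v₃ v₄ v₅ : Fin d₁ ⊕ Fin d₂ ⊕ Fin d₃}
    (h : (lineGraph Eab Eac Ebc).IsAntiHexagon v₀ v₁ v₂ v₃ v₄ v₅) :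
    ∃ a₁ a₂ b₁ b₂ c₁ c₂, (lineGraph Eab Eac Ebc).IsAntiHexagon (inl a₁) (inl a₂)
      (inr (inl b₁)) (inr (inl b₂)) (inr (inr c₁)) (inr (inr c₂)) := by
  wlog hpair : lineGraphPart v₀ = lineGraphPart v₁ ∧ lineGraphPart v₂ = lineGraphPart v₃ ∧
      lineGraphPart v₄ = lineGraphPart v₅ generalizing v₀ v₁ v₂ v₃ v₄ v₅
  · have hne := lineGraphPart_ne_of_isAntiHexagon h
    exact this h.rotate (by omega)
  wlog hA : lineGraphPart v₀ = 0 generalizing v₀ v₁ v₂ v₃ v₄ v₅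
  · have hne := lineGraphPart_ne_of_isAntiHexagon h
    by_cases h₂ : lineGraphPart v₂ = 0
    · exact this h.rotate.rotate (by omega) h₂
    · exact this h.rotate.rotate.rotate.rotate (by omega) (by omega)
  wlog hB : lineGraphPart v₂ = 1 generalizing v₀ v₁ v₂ v₃ v₄ v₅
  · have hne := lineGraphPart_ne_of_isAntiHexagon h
    exact this h.reflect (by omega) (by omega) (by omega)
  have hne := lineGraphPart_ne_of_isAntiHexagon h
  have h₁ : lineGraphPart v₁ = 0 := by omega
  have h₃ : lineGraphPart v₃ = 1 := by omega
  have h₄ : lineGraphPart v₄ = 2 := by omega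
  have h₅ : lineGraphPart v₅ = 2 := by omega
  obtain ⟨a₁, rfl⟩ := lineGraphPart_eq_zero_iff.1 hA
  obtain ⟨a₂, rfl⟩ := lineGraphPart_eq_zero_iff.1 h₁
  obtain ⟨b₁, rfl⟩ := lineGraphPart_eq_one_iff.1 hB
  obtain ⟨b₂, rfl⟩ := lineGraphPart_eq_one_iff.1 h₃
  obtain ⟨c₁, rfl⟩ := lineGraphPart_eq_two_iff.1 h₄
  obtain ⟨c₂, rfl⟩ := lineGraphPart_eq_two_iff.1 h₅
  exact ⟨a₁, a₂, b₁, b₂, c₁, c₂, h⟩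

theorem isAntiHexagon_lineGraph_iff {a₁ a₂ : Fin d₁} {b₁ b₂ : Fin d₂} {c₁ c₂ : Fin d₃} :
    (lineGraph Eab Eac Ebc).IsAntiHexagon (inl a₁) (inl a₂) (inr (inl b₁)) (inr (inl b₂))
        (inr (inr c₁)) (inr (inr c₂)) ↔
      (Eab a₁ b₁ ∧ Eac a₁ c₁ ∧ Ebc b₁ c₁) ∧ (Eab a₂ b₂ ∧ Eac a₂ c₂ ∧ Ebc b₂ c₂) ∧
        (Eab a₁ b₂ ∧ Eac a₂ c₁ ∧ Ebc b₁ c₂) ∧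
        (Eab a₂ b₁ = false ∧ Ebc b₂ c₁ = false ∧ Eac a₁ c₂ = false) := by
  simp only [SimpleGraph.IsAntiHexagon, lineGraph, SimpleGraph.fromRel_adj, ne_eq, inl.injEq,
    inr.injEq, reduceCtorEq, not_false_eq_true, true_and, and_true, and_false, or_self, or_false,
    false_or, Bool.not_eq_true]
  constructor
  · tauto
  · intro h
    obtain ⟨⟨h₁, h₂, h₃⟩, -, -, n₁, n₂, n₃⟩ := id h
    refine ⟨⟨?_, ?_, ?_⟩, by tauto⟩ <;> rintro rfl <;> simp [h₁, h₂, h₃] at n₁ n₂ n₃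

theorem mu_eq_toNat (i : Fin d₁) (j : Fin d₂) (k : Fin d₃) :
    mu Eab Eac Ebc i j k = (Eab i j).toNat + (Eac i k).toNat + (Ebc j k).toNat :=
  rfl

theorem mu_eq_three_iff {i : Fin d₁} {j : Fin d₂} {k : Fin d₃} :
    mu Eab Eac Ebc i j k = 3 ↔ Eab i j ∧ Eac i k ∧ Ebc j k := by
  rw [mu_eq_toNat]
  cases Eab i j <;> cases Eac i k <;> cases Ebc j k <;> decide

theorem mu_pattern_iff {a₁ a₂ : Fin d₁} {b₁ b₂ : Fin d₂} {c₁ c₂ : Fin d₃} :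
    (mu Eab Eac Ebc a₁ b₁ c₁ = 3 ∧ mu Eab Eac Ebc a₁ b₂ c₁ = 2 ∧
        mu Eab Eac Ebc a₂ b₁ c₁ = 2 ∧ mu Eab Eac Ebc a₂ b₂ c₁ = 2 ∧
        mu Eab Eac Ebc a₁ b₁ c₂ = 2 ∧ mu Eab Eac Ebc a₁ b₂ c₂ = 2 ∧
        mu Eab Eac Ebc a₂ b₁ c₂ = 2 ∧ mu Eab Eac Ebc a₂ b₂ c₂ = 3) ↔
      (lineGraph Eab Eac Ebc).IsAntiHexagon (inl a₁) (inl a₂) (inr (inl b₁)) (inr (inl b₂))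
        (inr (inr c₁)) (inr (inr c₂)) ∨
      (lineGraph Eab Eac Ebc).IsAntiHexagon (inl a₂) (inl a₁) (inr (inl b₂)) (inr (inl b₁))
        (inr (inr c₂)) (inr (inr c₁)) := by
  rw [isAntiHexagon_lineGraph_iff, isAntiHexagon_lineGraph_iff, mu_eq_three_iff, mu_eq_three_iff]
  simp only [mu_eq_toNat]
  constructor
  · rintro ⟨⟨h₁, h₂, h₃⟩, m₁, m₂, m₃, m₄, m₅, m₆, ⟨h₄, h₅, h₆⟩⟩
    simp only [h₁, h₂, h₃, h₄, h₅, h₆, Bool.toNat_true] at m₁ m₂ m₃ m₄ m₅ m₆ ⊢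
    cases hx : Eab a₁ b₂ <;> simp_all +arith
  · rintro (⟨⟨h₁, h₂, h₃⟩, ⟨h₄, h₅, h₆⟩, ⟨h₇, h₈, h₉⟩, ⟨h₁₀, h₁₁, h₁₂⟩⟩ |
      ⟨⟨h₄, h₅, h₆⟩, ⟨h₁, h₂, h₃⟩, ⟨h₇, h₈, h₉⟩, ⟨h₁₀, h₁₁, h₁₂⟩⟩) <;> simp [*]

end LineGraph

/-- `X` fails the `Hyp₆(⋆)`-property iff there are indices
`a₁, a₂, b₁, b₂, c₁, c₂` such that the 2×2 matrix of multiplicities on level `c₁` is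
`[[3,2],[2,2]]` and on level `c₂` is `[[2,2],[2,3]]`. -/
theorem not_hyp6_iff_mu_matrices {d₁ d₂ d₃ : ℕ}
    (Eab : Fin d₁ → Fin d₂ → Bool) (Eac : Fin d₁ → Fin d₃ → Bool)
    (Ebc : Fin d₂ → Fin d₃ → Bool) :
    ¬ HypStar (lineGraph Eab Eac Ebc) 6 ↔
      ∃ (a₁ a₂ : Fin d₁) (b₁ b₂ : Fin d₂) (c₁ c₂ : Fin d₃),
        mu Eab Eac Ebc a₁ b₁ c₁ = 3 ∧ mu Eab Eac Ebc a₁ b₂ c₁ = 2 ∧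
        mu Eab Eac Ebc a₂ b₁ c₁ = 2 ∧ mu Eab Eac Ebc a₂ b₂ c₁ = 2 ∧
        mu Eab Eac Ebc a₁ b₁ c₂ = 2 ∧ mu Eab Eac Ebc a₁ b₂ c₂ = 2 ∧
        mu Eab Eac Ebc a₂ b₁ c₂ = 2 ∧ mu Eab Eac Ebc a₂ b₂ c₂ = 3 := by
  rw [SimpleGraph.not_hypStar_six_iff]
  constructor
  · rintro ⟨v₀, v₁, v₂, v₃, v₄, v₅, h⟩
    obtain ⟨a₁, a₂, b₁, b₂, c₁, c₂, h⟩ := exists_isAntiHexagon_inl_inl h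
    exact ⟨a₁, a₂, b₁, b₂, c₁, c₂, mu_pattern_iff.2 (Or.inl h)⟩
  · rintro ⟨a₁, a₂, b₁, b₂, c₁, c₂, hμ⟩
    rcases mu_pattern_iff.1 hμ with h | h
    exacts [⟨_, _, _, _, _, _, h⟩, ⟨_, _, _, _, _, _, h⟩]
end

section
/- With notation as for varieties of lines modeled as tripartite graphs, and with μ_{ij0} = 1 if edge a_i b_j is present else 0 (and similarly μ_{i0k}, μ_{0jk}), X fails the Hyp₄(⋆)-property if and only if there exist indices such that one of the following three configurations occurs: (1) μ_{a₁b₁c₁} = μ_{a₂b₁c₁} = 1, μ_{a₁b₁0} = 1, μ_{a₂b₁0} = 0; (2) μ_{a₁b₁c₁} = μ_{a₁b₁c₂} = 1, μ_{a₁0c₁} = 1, μ_{a₁0c₂} = 0; (3) μ_{a₁b₁c₁} = μ_{a₁b₂c₁} = 1, μ_{0b₁c₁} = 1, μ_{0b₂c₁} = 0. -/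
/-!
Failure of `Hyp₄(⋆)` amounts to an induced `2K₂`: edges `xy` and `x'y'` with no edge between
them (the four vertices are then automatically distinct). Since the three directions properly
`3`-colour `G_X`, some vertex of one edge shares its direction with some vertex of the other, and
the Ferrers conditions forbid the two edges to join the same pair of directions. So the `2K₂` is
`a₁b, a₂c` or one of its analogues with two `c`'s or two `b`'s, and these are exactly the three
configurations of multiplicities.
-/

namespace SimpleGraph

variable {V : Type*} (G : SimpleGraph V)

def IsInducedMatching₂ (x y x' y' : V) : Prop :=
  G.Adj x y ∧ G.Adj x' y' ∧ ¬G.Adj x x' ∧ ¬G.Adj x y' ∧ ¬G.Adj y x' ∧ ¬G.Adj y y'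

namespace IsInducedMatching₂

variable {G} {x y x' y' : V}

lemma swap_left (h : G.IsInducedMatching₂ x y x' y') : G.IsInducedMatching₂ y x x' y' :=
  ⟨h.1.symm, h.2.1, h.2.2.2.2.1, h.2.2.2.2.2, h.2.2.1, h.2.2.2.1⟩

lemma swap_right (h : G.IsInducedMatching₂ x y x' y') : G.IsInducedMatching₂ x y y' x' :=
  ⟨h.1, h.2.1.symm, h.2.2.2.1, h.2.2.1, h.2.2.2.2.2, h.2.2.2.2.1⟩

lemma swap (h : G.IsInducedMatching₂ x y x' y') : G.IsInducedMatching₂ x' y' x y :=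
  ⟨h.2.1, h.1, fun e => h.2.2.1 e.symm, fun e => h.2.2.2.2.1 e.symm,
    fun e => h.2.2.2.1 e.symm, fun e => h.2.2.2.2.2 e.symm⟩

lemma exists_color_eq (C : G.Coloring (Fin 3)) (h : G.IsInducedMatching₂ x y x' y') :
    ∃ u v u' v', G.IsInducedMatching₂ u v u' v' ∧ C u = C u' := by
  have := C.valid h.1
  have := C.valid h.2.1
  rcases (show C x = C x' ∨ C x = C y' ∨ C y = C x' ∨ C y = C y' by omega) with e | e | e | e
  exacts [⟨_, _, _, _, h, e⟩, ⟨_, _, _, _, h.swap_right, e⟩, ⟨_, _, _, _, h.swap_left, e⟩,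
    ⟨_, _, _, _, h.swap_left.swap_right, e⟩]

end IsInducedMatching₂

end SimpleGraph

theorem not_hypStar_four_iff {V : Type*} (G : SimpleGraph V) :
    ¬HypStar G 4 ↔ ∃ x y x' y', G.IsInducedMatching₂ x y x' y' := by
  constructor
  · intro h
    simp only [HypStar, not_forall, not_exists] at h
    obtain ⟨H, -, hdiag, hcons⟩ := h
    have hcons' (u : ZMod 4) : ¬G.Adj (H (u + 1)) (H u) := fun e => hcons u e.symm
    exact ⟨H 0, H 2, H 1, H 3, hdiag 0 2 (by decide) (by decide) (by decide),
      hdiag 1 3 (by decide) (by decide) (by decide), hcons 0, hcons' 3, hcons' 1, hcons 2⟩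
  · rintro ⟨x, y, x', y', hxy, hxy', hxx', hxy'', hyx', hyy'⟩ hyp
    have hne : x ≠ x' ∧ x ≠ y' ∧ y ≠ x' ∧ y ≠ y' := by
      refine ⟨?_, ?_, ?_, ?_⟩ <;> rintro rfl <;> simp_all [G.adj_comm]
    obtain ⟨u, hu⟩ := hyp ![x, x', y, y']
      (by
        intro i j hij
        fin_cases i <;> fin_cases j <;> simp_all [eq_comm, hxy.ne, hxy'.ne] <;> rfl)
      (by
        intro i j h₁ h₂ h₃
        obtain rfl : j = i + 2 := by revert i j; decide
        fin_cases i
        exacts [hxy, hxy', hxy.symm, hxy'.symm])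
    fin_cases u
    exacts [hxx' hu, hyx' hu.symm, hyy' hu, hxy'' hu.symm]

/-- Up to reordering rows and columns, the `0/1`-matrix `E` is a Ferrers diagram. -/
def IsFerrers {α β : Type*} (E : α → β → Bool) : Prop :=
  ∀ i i' j j', E i j = true → E i' j' = true → E i j' = true ∨ E i' j = true

lemma IsFerrers.not_isInducedMatching₂ {α β V : Type*} {E : α → β → Bool} (hE : IsFerrers E)
    {G : SimpleGraph V} {f : α → V} {g : β → V} (hfg : ∀ i j, G.Adj (f i) (g j) ↔ E i j = true)
    (i i' : α) (j j' : β) : ¬G.IsInducedMatching₂ (f i) (g j) (f i') (g j') := by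
  rintro ⟨h₁, h₂, -, h₃, h₄, -⟩
  rw [hfg] at h₁ h₂ h₃
  rw [G.adj_comm, hfg] at h₄
  exact (hE _ _ _ _ h₁ h₂).elim h₃ h₄

section lineGraph

variable {d₁ d₂ d₃ : ℕ} {Eab : Fin d₁ → Fin d₂ → Bool} {Eac : Fin d₁ → Fin d₃ → Bool}
    {Ebc : Fin d₂ → Fin d₃ → Bool}

lemma lineGraph_adj_ab (i : Fin d₁) (j : Fin d₂) :
    (lineGraph Eab Eac Ebc).Adj (.inl i) (.inr (.inl j)) ↔ Eab i j = true := by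
  simp [lineGraph]

lemma lineGraph_adj_ac (i : Fin d₁) (k : Fin d₃) :
    (lineGraph Eab Eac Ebc).Adj (.inl i) (.inr (.inr k)) ↔ Eac i k = true := by
  simp [lineGraph]

lemma lineGraph_adj_bc (j : Fin d₂) (k : Fin d₃) :
    (lineGraph Eab Eac Ebc).Adj (.inr (.inl j)) (.inr (.inr k)) ↔ Ebc j k = true := by
  simp [lineGraph]

def lineGraph.direction : Fin d₁ ⊕ Fin d₂ ⊕ Fin d₃ → Fin 3
  | .inl _ => 0
  | .inr (.inl _) => 1
  | .inr (.inr _) => 2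

def lineGraph.coloring : (lineGraph Eab Eac Ebc).Coloring (Fin 3) :=
  SimpleGraph.Coloring.mk lineGraph.direction fun {u v} huv => by
    rcases u with _ | _ | _ <;> rcases v with _ | _ | _ <;>
      simp_all [lineGraph, lineGraph.direction]

variable (Eab Eac Ebc) in
def MuConfig : Prop :=
  (∃ (a₁ a₂ : Fin d₁) (b₁ : Fin d₂) (c₁ : Fin d₃),
      mu Eab Eac Ebc a₁ b₁ c₁ = 1 ∧ mu Eab Eac Ebc a₂ b₁ c₁ = 1 ∧
      (cond (Eab a₁ b₁) 1 0 : ℕ) = 1 ∧ (cond (Eab a₂ b₁) 1 0 : ℕ) = 0) ∨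
  (∃ (a₁ : Fin d₁) (b₁ : Fin d₂) (c₁ c₂ : Fin d₃),
      mu Eab Eac Ebc a₁ b₁ c₁ = 1 ∧ mu Eab Eac Ebc a₁ b₁ c₂ = 1 ∧
      (cond (Eac a₁ c₁) 1 0 : ℕ) = 1 ∧ (cond (Eac a₁ c₂) 1 0 : ℕ) = 0) ∨
  (∃ (a₁ : Fin d₁) (b₁ b₂ : Fin d₂) (c₁ : Fin d₃),
      mu Eab Eac Ebc a₁ b₁ c₁ = 1 ∧ mu Eab Eac Ebc a₁ b₂ c₁ = 1 ∧
      (cond (Ebc b₁ c₁) 1 0 : ℕ) = 1 ∧ (cond (Ebc b₂ c₁) 1 0 : ℕ) = 0)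

lemma mu_config_aa_iff {a₁ a₂ : Fin d₁} {b : Fin d₂} {c : Fin d₃} :
    (mu Eab Eac Ebc a₁ b c = 1 ∧ mu Eab Eac Ebc a₂ b c = 1 ∧
      (cond (Eab a₁ b) 1 0 : ℕ) = 1 ∧ (cond (Eab a₂ b) 1 0 : ℕ) = 0) ↔
    (lineGraph Eab Eac Ebc).IsInducedMatching₂
      (.inl a₁) (.inr (.inl b)) (.inl a₂) (.inr (.inr c)) := by
  simp only [SimpleGraph.IsInducedMatching₂, mu, lineGraph, SimpleGraph.fromRel_adj]
  cases Eab a₁ b <;> cases Eab a₂ b <;> cases Eac a₁ c <;> cases Eac a₂ c <;> cases Ebc b c <;>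
    simp

lemma mu_config_cc_iff {a : Fin d₁} {b : Fin d₂} {c₁ c₂ : Fin d₃} :
    (mu Eab Eac Ebc a b c₁ = 1 ∧ mu Eab Eac Ebc a b c₂ = 1 ∧
      (cond (Eac a c₁) 1 0 : ℕ) = 1 ∧ (cond (Eac a c₂) 1 0 : ℕ) = 0) ↔
    (lineGraph Eab Eac Ebc).IsInducedMatching₂
      (.inr (.inr c₁)) (.inl a) (.inr (.inr c₂)) (.inr (.inl b)) := by
  simp only [SimpleGraph.IsInducedMatching₂, mu, lineGraph, SimpleGraph.fromRel_adj]
  cases Eac a c₁ <;> cases Eac a c₂ <;> cases Eab a b <;> cases Ebc b c₁ <;> cases Ebc b c₂ <;>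
    simp

lemma mu_config_bb_iff {a : Fin d₁} {b₁ b₂ : Fin d₂} {c : Fin d₃} :
    (mu Eab Eac Ebc a b₁ c = 1 ∧ mu Eab Eac Ebc a b₂ c = 1 ∧
      (cond (Ebc b₁ c) 1 0 : ℕ) = 1 ∧ (cond (Ebc b₂ c) 1 0 : ℕ) = 0) ↔
    (lineGraph Eab Eac Ebc).IsInducedMatching₂
      (.inr (.inl b₁)) (.inr (.inr c)) (.inr (.inl b₂)) (.inl a) := by
  simp only [SimpleGraph.IsInducedMatching₂, mu, lineGraph, SimpleGraph.fromRel_adj]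
  cases Ebc b₁ c <;> cases Ebc b₂ c <;> cases Eab a b₁ <;> cases Eab a b₂ <;> cases Eac a c <;>
    simp

lemma muConfig_of_isInducedMatching₂_inl (hab : IsFerrers Eab) (hac : IsFerrers Eac)
    {a a' : Fin d₁} {y y' : Fin d₁ ⊕ Fin d₂ ⊕ Fin d₃}
    (h : (lineGraph Eab Eac Ebc).IsInducedMatching₂ (.inl a) y (.inl a') y') :
    MuConfig Eab Eac Ebc := by
  rcases y with _ | b | c <;> rcases y' with _ | b' | c'
  any_goals exact (lineGraph.coloring.valid h.1 rfl).elim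
  any_goals exact (lineGraph.coloring.valid h.2.1 rfl).elim
  · exact (hab.not_isInducedMatching₂ lineGraph_adj_ab _ _ _ _ h).elim
  · exact Or.inl ⟨a, a', b, c', mu_config_aa_iff.2 h⟩
  · exact Or.inl ⟨a', a, b', c, mu_config_aa_iff.2 h.swap⟩
  · exact (hac.not_isInducedMatching₂ lineGraph_adj_ac _ _ _ _ h).elim

lemma muConfig_of_isInducedMatching₂_inr_inl (hab : IsFerrers Eab) (hbc : IsFerrers Ebc)
    {b b' : Fin d₂} {y y' : Fin d₁ ⊕ Fin d₂ ⊕ Fin d₃}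
    (h : (lineGraph Eab Eac Ebc).IsInducedMatching₂ (.inr (.inl b)) y (.inr (.inl b')) y') :
    MuConfig Eab Eac Ebc := by
  rcases y with a | _ | c <;> rcases y' with a' | _ | c'
  any_goals exact (lineGraph.coloring.valid h.1 rfl).elim
  any_goals exact (lineGraph.coloring.valid h.2.1 rfl).elim
  · exact (hab.not_isInducedMatching₂ lineGraph_adj_ab _ _ _ _ h.swap_left.swap_right).elim
  · exact Or.inr (Or.inr ⟨a, b', b, c', mu_config_bb_iff.2 h.swap⟩)
  · exact Or.inr (Or.inr ⟨a', b, b', c, mu_config_bb_iff.2 h⟩)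
  · exact (hbc.not_isInducedMatching₂ lineGraph_adj_bc _ _ _ _ h).elim

lemma muConfig_of_isInducedMatching₂_inr_inr (hac : IsFerrers Eac) (hbc : IsFerrers Ebc)
    {c c' : Fin d₃} {y y' : Fin d₁ ⊕ Fin d₂ ⊕ Fin d₃}
    (h : (lineGraph Eab Eac Ebc).IsInducedMatching₂ (.inr (.inr c)) y (.inr (.inr c')) y') :
    MuConfig Eab Eac Ebc := by
  rcases y with a | b | _ <;> rcases y' with a' | b' | _
  any_goals exact (lineGraph.coloring.valid h.1 rfl).elim
  any_goals exact (lineGraph.coloring.valid h.2.1 rfl).elim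
  · exact (hac.not_isInducedMatching₂ lineGraph_adj_ac _ _ _ _ h.swap_left.swap_right).elim
  · exact Or.inr (Or.inl ⟨a, b', c, c', mu_config_cc_iff.2 h⟩)
  · exact Or.inr (Or.inl ⟨a', b, c', c, mu_config_cc_iff.2 h.swap⟩)
  · exact (hbc.not_isInducedMatching₂ lineGraph_adj_bc _ _ _ _ h.swap_left.swap_right).elim

lemma muConfig_of_isInducedMatching₂ (hab : IsFerrers Eab) (hac : IsFerrers Eac)
    (hbc : IsFerrers Ebc) {x y x' y' : Fin d₁ ⊕ Fin d₂ ⊕ Fin d₃}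
    (h : (lineGraph Eab Eac Ebc).IsInducedMatching₂ x y x' y') : MuConfig Eab Eac Ebc := by
  obtain ⟨u, v, u', v', h, huu'⟩ := h.exists_color_eq lineGraph.coloring
  change lineGraph.direction u = lineGraph.direction u' at huu'
  rcases u with a | b | c <;> rcases u' with a' | b' | c' <;>
    simp only [lineGraph.direction, Fin.reduceEq] at huu'
  · exact muConfig_of_isInducedMatching₂_inl hab hac h
  · exact muConfig_of_isInducedMatching₂_inr_inl hab hbc h
  · exact muConfig_of_isInducedMatching₂_inr_inr hac hbc h

end lineGraph

/-- under the standing assumption of the section that each of the index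
sets `U_h(X)` resembles a Ferrers diagram (expressed here by the "no two incomparable
lines" conditions `hab`, `hac`, `hbc`), the variety `X` fails the `Hyp₄(⋆)`-property iff
one of the three configurations of multiplicities
`μ_{a₁b₁c₁} = μ_{a₂b₁c₁} = 1, μ_{a₁b₁0} = 1, μ_{a₂b₁0} = 0` (and its two analogues
obtained by permuting the roles of the three directions) occurs. -/
theorem not_hyp4_iff_mu_config {d₁ d₂ d₃ : ℕ}
    (Eab : Fin d₁ → Fin d₂ → Bool) (Eac : Fin d₁ → Fin d₃ → Bool)
    (Ebc : Fin d₂ → Fin d₃ → Bool)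
    (hab : ∀ i i' j j', Eab i j = true → Eab i' j' = true →
      Eab i j' = true ∨ Eab i' j = true)
    (hac : ∀ i i' k k', Eac i k = true → Eac i' k' = true →
      Eac i k' = true ∨ Eac i' k = true)
    (hbc : ∀ j j' k k', Ebc j k = true → Ebc j' k' = true →
      Ebc j k' = true ∨ Ebc j' k = true) :
    ¬ HypStar (lineGraph Eab Eac Ebc) 4 ↔
      ((∃ (a₁ a₂ : Fin d₁) (b₁ : Fin d₂) (c₁ : Fin d₃),
          mu Eab Eac Ebc a₁ b₁ c₁ = 1 ∧ mu Eab Eac Ebc a₂ b₁ c₁ = 1 ∧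
          (cond (Eab a₁ b₁) 1 0 : ℕ) = 1 ∧ (cond (Eab a₂ b₁) 1 0 : ℕ) = 0) ∨
       (∃ (a₁ : Fin d₁) (b₁ : Fin d₂) (c₁ c₂ : Fin d₃),
          mu Eab Eac Ebc a₁ b₁ c₁ = 1 ∧ mu Eab Eac Ebc a₁ b₁ c₂ = 1 ∧
          (cond (Eac a₁ c₁) 1 0 : ℕ) = 1 ∧ (cond (Eac a₁ c₂) 1 0 : ℕ) = 0) ∨
       (∃ (a₁ : Fin d₁) (b₁ b₂ : Fin d₂) (c₁ : Fin d₃),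
          mu Eab Eac Ebc a₁ b₁ c₁ = 1 ∧ mu Eab Eac Ebc a₁ b₂ c₁ = 1 ∧
          (cond (Ebc b₁ c₁) 1 0 : ℕ) = 1 ∧ (cond (Ebc b₂ c₁) 1 0 : ℕ) = 0)) := by
  rw [not_hypStar_four_iff]
  constructor
  · rintro ⟨x, y, x', y', h⟩
    exact muConfig_of_isInducedMatching₂ hab hac hbc h
  · rintro (⟨a₁, a₂, b, c, h⟩ | ⟨a, b, c₁, c₂, h⟩ | ⟨a, b₁, b₂, c, h⟩)
    exacts [⟨_, _, _, _, mu_config_aa_iff.1 h⟩, ⟨_, _, _, _, mu_config_cc_iff.1 h⟩,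
      ⟨_, _, _, _, mu_config_bb_iff.1 h⟩]
end

section
/- Let X be a Ferrers variety of lines in ℙ¹×ℙ¹×ℙ¹ and D̂(X) the set of minimal elements (under the componentwise order on ℕ³) of D(X) = { (max{a₃,a₂}, max{b₃,b₁}, max{c₁,c₂}) : (a₃,b₃,0) ∈ D₃(X), (a₂,0,c₂) ∈ D₂(X), (0,b₁,c₁) ∈ D₁(X) }. Then the ideal I_X is minimally generated by the products ∏_{i≤a} A_i · ∏_{j≤b} B_j · ∏_{k≤c} C_k for (a,b,c) ∈ D̂(X). -/
/-!
The ideals `(A_i, B_j)`, `(A_i, C_k)`, `(B_j, C_k)` are prime, being kernels of substitutions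
that solve each form for one of its variables, and a linear form lies in such an ideal only if it
is proportional to one of the two generators. Hence `∏_{i<a} A_i ∏_{j<b} B_j ∏_{k<c} C_k` lies in
`(A_i, B_j)` iff `i < a` or `j < b`, so it lies in `I_X` iff `(a, b) ∉ U₃`, `(a, c) ∉ U₂` and
`(b, c) ∉ U₁`; `D̂(X)` is the set of minimal such exponents.

That `I_X` is spanned by the products it contains is proved by induction on the number of cells.
Removing a maximal cell `(i, j)` of `U₃` gives `I_X = I' ∩ (A_i, B_j)`; the products of `I'`
outside `(A_i, B_j)` are the multiples of one product `g ∉ (A_i, B_j)`, while `A_i g` and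
`B_j g` are products in `I_X`. Writing `F ∈ I_X` as `G + h g` with `G` a combination of products
in `I_X`, primality gives `h ∈ (A_i, B_j)`, so `h g` is one as well. Cells of `U₂` and `U₁` are
handled by permuting the three families.

Minimality comes from the trigrading: each product is trihomogeneous of tridegree its exponent
vector, and no element of `D̂(X)` lies below another.
-/

open MvPolynomial

noncomputable section

/-- The weight giving the `t`-th component of the tridegree on
`R = K[x_{1,0},x_{1,1},x_{2,0},x_{2,1},x_{3,0},x_{3,1}]`. -/
def triWeight (t : Fin 3) : Fin 3 × Fin 2 → ℕ := fun p => if p.1 = t then 1 else 0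

variable {K : Type*} [Field K]

/-- `F` is trihomogeneous of tridegree `d`. -/
def TriHomogeneous (F : MvPolynomial (Fin 3 × Fin 2) K) (d : Fin 3 → ℕ) : Prop :=
  ∀ t : Fin 3, F.IsWeightedHomogeneous (triWeight t) (d t)

/-- The ideal `⋂_{(i,j) ∈ U} (F_i, G_j)` of the lines indexed by `U` (for two of the
three families of hyperplanes `F, G`). -/
def idealPart (F G : ℕ → MvPolynomial (Fin 3 × Fin 2) K) (U : Finset (ℕ × ℕ)) :
    Ideal (MvPolynomial (Fin 3 × Fin 2) K) :=
  ⨅ p ∈ U, Ideal.span {F p.1, G p.2}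

/-- The ideal `I_X` of the variety of lines with index sets `U₃, U₂, U₁`. -/
def lineIdeal (A B C : ℕ → MvPolynomial (Fin 3 × Fin 2) K) (U₃ U₂ U₁ : Finset (ℕ × ℕ)) :
    Ideal (MvPolynomial (Fin 3 × Fin 2) K) :=
  idealPart A B U₃ ⊓ idealPart A C U₂ ⊓ idealPart B C U₁

/-- The product `∏_{i ≤ a} A_i ∏_{j ≤ b} B_j ∏_{k ≤ c} C_k` (indices starting from 0). -/
def genProd (A B C : ℕ → MvPolynomial (Fin 3 × Fin 2) K) (a b c : ℕ) :
    MvPolynomial (Fin 3 × Fin 2) K :=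
  (∏ i ∈ Finset.range a, A i) * (∏ j ∈ Finset.range b, B j) * (∏ k ∈ Finset.range c, C k)

/-- The set of degrees of the minimal generators of an ideal `I` among the nested
products `f d`: the minimal degrees `d` with `f d ∈ I`. -/
def minDegs (I : Ideal (MvPolynomial (Fin 3 × Fin 2) K))
    (f : ℕ × ℕ → MvPolynomial (Fin 3 × Fin 2) K) : Set (ℕ × ℕ) :=
  {d | f d ∈ I ∧ ∀ d', f d' ∈ I → d' ≤ d → d' = d}

/-- The set `D(X)` of componentwise maxima of one degree from each of
`D₃(X), D₂(X), D₁(X)`. -/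
def Dset (A B C : ℕ → MvPolynomial (Fin 3 × Fin 2) K) (U₃ U₂ U₁ : Finset (ℕ × ℕ)) :
    Set (ℕ × ℕ × ℕ) :=
  {t | ∃ p₃ ∈ minDegs (idealPart A B U₃) (fun d => genProd A B C d.1 d.2 0),
       ∃ p₂ ∈ minDegs (idealPart A C U₂) (fun d => genProd A B C d.1 0 d.2),
       ∃ p₁ ∈ minDegs (idealPart B C U₁) (fun d => genProd A B C 0 d.1 d.2),
       t = (max p₃.1 p₂.1, max p₃.2 p₁.1, max p₂.2 p₁.2)}

/-- `D̂(X)`: the set of minimal elements of `D(X)` for the componentwise order. -/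
def Dhat (A B C : ℕ → MvPolynomial (Fin 3 × Fin 2) K) (U₃ U₂ U₁ : Finset (ℕ × ℕ)) :
    Set (ℕ × ℕ × ℕ) :=
  {t ∈ Dset A B C U₃ U₂ U₁ | ∀ t' ∈ Dset A B C U₃ U₂ U₁, t' ≤ t → t' = t}

theorem MvPolynomial.sub_aeval_mem {σ R : Type*} [CommRing R] {I : Ideal (MvPolynomial σ R)}
    {f : σ → MvPolynomial σ R} (hf : ∀ i, X i - f i ∈ I) (q : MvPolynomial σ R) :
    q - aeval f q ∈ I := by
  have hmk : (Ideal.Quotient.mkₐ R I).comp (aeval f) = Ideal.Quotient.mkₐ R I :=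
    algHom_ext fun i => by
      simpa [Ideal.Quotient.mkₐ_eq_mk, Ideal.Quotient.eq] using I.neg_mem (hf i)
  rw [← Ideal.Quotient.eq]
  simpa [Ideal.Quotient.mkₐ_eq_mk] using (AlgHom.congr_fun hmk q).symm

theorem MvPolynomial.ker_aeval_eq {σ R : Type*} [CommRing R] {I : Ideal (MvPolynomial σ R)}
    {f : σ → MvPolynomial σ R} (hI : I ≤ RingHom.ker (aeval f)) (hf : ∀ i, X i - f i ∈ I) :
    RingHom.ker (aeval f) = I := by
  refine le_antisymm (fun q hq => ?_) hI
  simpa only [RingHom.mem_ker.mp hq, sub_zero] using sub_aeval_mem hf q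

theorem MvPolynomial.notMem_span_of_isWeightedHomogeneous {σ R M : Type*} [CommSemiring R]
    [AddCommMonoid M] [PartialOrder M] [CanonicallyOrderedAdd M] {w : σ → M}
    {T : Set (MvPolynomial σ R)} {g : MvPolynomial σ R} {d : M}
    (hg : IsWeightedHomogeneous w g d) (hg0 : g ≠ 0)
    (hT : ∀ s ∈ T, ∃ e, ¬ e ≤ d ∧ IsWeightedHomogeneous w s e) : g ∉ Ideal.span T := by
  classical
  suffices h : ∀ x ∈ Ideal.span T, ∀ m ∈ x.support, ¬ Finsupp.weight w m ≤ d by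
    obtain ⟨m, hm⟩ := support_nonempty.mpr hg0
    exact fun hgT => h g hgT m hm (hg (mem_support_iff.mp hm)).le
  intro x hx
  induction hx using Submodule.span_induction with
  | mem s hs =>
    obtain ⟨e, hed, hse⟩ := hT s hs
    intro m hm
    rwa [hse (mem_support_iff.mp hm)]
  | zero => simp
  | add x y _ _ hx hy =>
    intro m hm
    rcases Finset.mem_union.mp (support_add hm) with h | h
    exacts [hx m h, hy m h]
  | smul r x _ hx =>
    intro m hm hmd
    obtain ⟨m₁, -, m₂, hm₂, rfl⟩ := Finset.mem_add.mp (support_mul r x hm)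
    rw [map_add] at hmd
    exact hx m₂ hm₂ (le_add_self.trans hmd)

theorem Ideal.inf_span_pair_le_span_inter {R : Type*} [CommRing R] {S : Set R} {I : Ideal R}
    {x y g : R} (hP : (Ideal.span {x, y}).IsPrime) (hI : I ≤ Ideal.span ((I : Set R) ∩ S))
    (hgI : g ∈ I) (hg : g ∉ Ideal.span {x, y}) (hxg : x * g ∈ S) (hyg : y * g ∈ S)
    (hdvd : ∀ s ∈ (I : Set R) ∩ S, s ∉ Ideal.span {x, y} → g ∣ s) :
    I ⊓ Ideal.span {x, y} ≤ Ideal.span (((I ⊓ Ideal.span {x, y} : Ideal R) : Set R) ∩ S) := by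
  set P := Ideal.span {x, y}
  set J := Ideal.span (((I ⊓ P : Ideal R) : Set R) ∩ S)
  have hJP : J ≤ P := Ideal.span_le.mpr fun s hs => hs.1.2
  have hmul : ∀ z ∈ P, z * g ∈ S → z * g ∈ J := fun z hz hzS =>
    Ideal.subset_span ⟨⟨I.mul_mem_left z hgI, P.mul_mem_right g hz⟩, hzS⟩
  have hIS : I ≤ J ⊔ Ideal.span {g} := hI.trans <| Ideal.span_le.mpr fun s hs => by
    by_cases hsP : s ∈ P
    · exact Ideal.mem_sup_left (Ideal.subset_span ⟨⟨hs.1, hsP⟩, hs.2⟩)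
    · exact Ideal.mem_sup_right (Ideal.mem_span_singleton.mpr (hdvd s hs hsP))
  rintro F ⟨hFI, hFP⟩
  obtain ⟨G, hG, E, hE, rfl⟩ := Submodule.mem_sup.mp (hIS hFI)
  obtain ⟨h, rfl⟩ := Ideal.mem_span_singleton'.mp hE
  have hhP : h ∈ P := (hP.mem_or_mem (by simpa using P.sub_mem hFP (hJP hG))).resolve_right hg
  obtain ⟨u, v, rfl⟩ := Ideal.mem_span_pair.mp hhP
  have hx : x ∈ P := Ideal.subset_span (by simp)
  have hy : y ∈ P := Ideal.subset_span (by simp)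
  have hsplit : (u * x + v * y) * g = u * (x * g) + v * (y * g) := by ring
  rw [hsplit]
  exact J.add_mem hG
    (J.add_mem (J.mul_mem_left u (hmul x hx hxg)) (J.mul_mem_left v (hmul y hy hyg)))

theorem isLowerSet_image_swap {α β : Type*} [LE α] [LE β] [DecidableEq (β × α)]
    {U : Finset (α × β)} (hU : IsLowerSet (U : Set (α × β))) :
    IsLowerSet ((U.image Prod.swap : Finset (β × α)) : Set (β × α)) := by
  rw [Finset.coe_image]
  rintro _ q hq ⟨p, hp, rfl⟩
  exact ⟨q.swap, hU (Prod.swap_le_swap.mpr hq) hp, q.swap_swap⟩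

theorem isLowerSet_erase_of_maximal {α : Type*} [PartialOrder α] [DecidableEq α] {U : Finset α}
    (hU : IsLowerSet (U : Set α)) {p : α} (hp : Maximal (· ∈ U) p) :
    IsLowerSet ((U.erase p : Finset α) : Set α) := by
  rw [Finset.coe_erase]
  exact hU.erase fun q hq hpq => hp.eq_of_le hq hpq |>.symm

def linForm (t : Fin 3) (a b : K) : MvPolynomial (Fin 3 × Fin 2) K :=
  C a * X (t, 0) + C b * X (t, 1)

def IsLinearForm (t : Fin 3) (F : MvPolynomial (Fin 3 × Fin 2) K) : Prop :=
  F ≠ 0 ∧ ∃ a b : K, F = linForm t a b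

theorem exists_dual_of_linForm_ne_zero {t : Fin 3} {a b : K} (h : linForm t a b ≠ 0) :
    ∃ γ : Fin 2 → K, a * γ 0 + b * γ 1 = 1 := by
  by_cases ha : a = 0
  · have hb : b ≠ 0 := by rintro rfl; simp [linForm, ha] at h
    exact ⟨![0, b⁻¹], by simp [ha, hb]⟩
  · exact ⟨![a⁻¹, 0], by simp [ha]⟩

theorem aeval_linForm (γ δ : Fin 3 × Fin 2 → K) (F G : MvPolynomial (Fin 3 × Fin 2) K)
    (t : Fin 3) (a b : K) :
    aeval (fun p => X p - C (γ p) * F - C (δ p) * G) (linForm t a b) =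
      linForm t a b - C (a * γ (t, 0) + b * γ (t, 1)) * F -
        C (a * δ (t, 0) + b * δ (t, 1)) * G := by
  simp only [linForm, map_add, map_mul, aeval_C, aeval_X, algebraMap_eq]
  ring

-- `γ` and `δ` are dual to `F` and `G`, so the substitution `x_p ↦ x_p - γ_p F - δ_p G` kills
-- both forms while moving every variable only modulo `(F, G)`.
theorem exists_ker_aeval_eq_span_pair {t₁ t₂ : Fin 3} (h : t₁ ≠ t₂)
    {F G : MvPolynomial (Fin 3 × Fin 2) K} (hF : IsLinearForm t₁ F) (hG : IsLinearForm t₂ G) :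
    ∃ γ δ : Fin 3 × Fin 2 → K, (∀ p, p.1 ≠ t₁ → γ p = 0) ∧ (∀ p, p.1 ≠ t₂ → δ p = 0) ∧
      RingHom.ker (aeval fun p => X p - C (γ p) * F - C (δ p) * G) = Ideal.span {F, G} := by
  obtain ⟨hF0, a₁, b₁, rfl⟩ := hF
  obtain ⟨hG0, a₂, b₂, rfl⟩ := hG
  obtain ⟨γ, hγ⟩ := exists_dual_of_linForm_ne_zero hF0
  obtain ⟨δ, hδ⟩ := exists_dual_of_linForm_ne_zero hG0
  refine ⟨fun p => if p.1 = t₁ then γ p.2 else 0, fun p => if p.1 = t₂ then δ p.2 else 0,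
    fun p hp => if_neg hp, fun p hp => if_neg hp, MvPolynomial.ker_aeval_eq ?_ fun p => ?_⟩
  · rw [Ideal.span_le]
    rintro _ (rfl | rfl) <;> rw [SetLike.mem_coe, RingHom.mem_ker, aeval_linForm] <;>
      simp [h, h.symm, hγ, hδ]
  · have hsub : X p - (X p - C (if p.1 = t₁ then γ p.2 else 0) * linForm t₁ a₁ b₁ -
        C (if p.1 = t₂ then δ p.2 else 0) * linForm t₂ a₂ b₂) =
        C (if p.1 = t₁ then γ p.2 else 0) * linForm t₁ a₁ b₁ +
        C (if p.1 = t₂ then δ p.2 else 0) * linForm t₂ a₂ b₂ := by ring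
    rw [hsub]
    exact Ideal.mem_span_pair.mpr ⟨_, _, rfl⟩

theorem IsLinearForm.span_pair_isPrime {t₁ t₂ : Fin 3} (h : t₁ ≠ t₂)
    {F G : MvPolynomial (Fin 3 × Fin 2) K} (hF : IsLinearForm t₁ F) (hG : IsLinearForm t₂ G) :
    (Ideal.span {F, G}).IsPrime := by
  obtain ⟨γ, δ, -, -, hker⟩ := exists_ker_aeval_eq_span_pair h hF hG
  rw [← hker]
  exact RingHom.ker_isPrime _

theorem IsLinearForm.mem_span_pair {t₁ t₂ t : Fin 3} (h : t₁ ≠ t₂)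
    {F G L : MvPolynomial (Fin 3 × Fin 2) K} (hF : IsLinearForm t₁ F) (hG : IsLinearForm t₂ G)
    (hL : IsLinearForm t L) (hLFG : L ∈ Ideal.span {F, G}) :
    (t = t₁ ∧ ∃ s : K, L = s • F) ∨ (t = t₂ ∧ ∃ s : K, L = s • G) := by
  obtain ⟨γ, δ, hγ, hδ, hker⟩ := exists_ker_aeval_eq_span_pair h hF hG
  obtain ⟨hL0, a, b, rfl⟩ := hL
  rw [← hker, RingHom.mem_ker, aeval_linForm, sub_sub, sub_eq_zero] at hLFG
  rw [hLFG]
  by_cases ht₁ : t = t₁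
  · subst ht₁
    left
    refine ⟨rfl, a * γ (t, 0) + b * γ (t, 1), ?_⟩
    simp [hδ (t, 0) h, hδ (t, 1) h, smul_eq_C_mul]
  by_cases ht₂ : t = t₂
  · subst ht₂
    right
    refine ⟨rfl, a * δ (t, 0) + b * δ (t, 1), ?_⟩
    simp [hγ (t, 0) ht₁, hγ (t, 1) ht₁, smul_eq_C_mul]
  · refine absurd ?_ hL0
    rw [hLFG]
    simp [hγ (t, 0) ht₁, hγ (t, 1) ht₁, hδ (t, 0) ht₂, hδ (t, 1) ht₂]

theorem weight_triWeight (t : Fin 3) (m : (Fin 3 × Fin 2) →₀ ℕ) :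
    Finsupp.weight (triWeight t) m = m (t, 0) + m (t, 1) := by
  rw [Finsupp.weight_apply, Finsupp.sum_fintype _ _ (by simp), Fintype.sum_prod_type]
  simp [triWeight, Finset.sum_ite_eq']

theorem eq_single_of_weight_triWeight {t : Fin 3} {m : (Fin 3 × Fin 2) →₀ ℕ}
    (h : ∀ t', Finsupp.weight (triWeight t') m = (Pi.single t 1 : Fin 3 → ℕ) t') :
    m = Finsupp.single (t, 0) 1 ∨ m = Finsupp.single (t, 1) 1 := by
  have hm : ∀ t', m (t', 0) + m (t', 1) = if t' = t then 1 else 0 := fun t' => by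
    rw [← weight_triWeight, h, Pi.single_apply]
  have ht := hm t
  rw [if_pos rfl] at ht
  rcases Nat.add_eq_one_iff.mp ht with ⟨h0, h1⟩ | ⟨h0, h1⟩ <;> [right; left] <;>
  · ext ⟨t', j⟩
    by_cases htt : t' = t
    · subst htt; fin_cases j <;> simp_all
    · have := hm t'
      rw [if_neg htt] at this
      fin_cases j <;> simp [htt] <;> omega

theorem TriHomogeneous.isLinearForm {t : Fin 3} {F : MvPolynomial (Fin 3 × Fin 2) K}
    (hF : TriHomogeneous F (Pi.single t 1)) (hF0 : F ≠ 0) : IsLinearForm t F := by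
  classical
  refine ⟨hF0, coeff (Finsupp.single (t, 0) 1) F, coeff (Finsupp.single (t, 1) 1) F, ?_⟩
  have hsupp : F.support ⊆ {Finsupp.single (t, 0) 1, Finsupp.single (t, 1) 1} := fun m hm => by
    simpa using eq_single_of_weight_triWeight fun t' => hF t' (mem_support_iff.mp hm)
  have hne : Finsupp.single (t, (0 : Fin 2)) 1 ≠ Finsupp.single (t, 1) 1 := by
    simp [Finsupp.single_left_inj]
  calc F = ∑ m ∈ F.support, monomial m (coeff m F) := F.as_sum
    _ = ∑ m ∈ {Finsupp.single (t, 0) 1, Finsupp.single (t, 1) 1}, monomial m (coeff m F) :=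
      Finset.sum_subset hsupp fun m _ hm => by simp [notMem_support_iff.mp hm]
    _ = _ := by rw [Finset.sum_pair hne, linForm, C_mul_X_eq_monomial, C_mul_X_eq_monomial]

def triDegWeight : Fin 3 × Fin 2 → Fin 3 → ℕ := fun p t => triWeight t p

theorem TriHomogeneous.isWeightedHomogeneous {F : MvPolynomial (Fin 3 × Fin 2) K}
    {d : Fin 3 → ℕ} (hF : TriHomogeneous F d) : F.IsWeightedHomogeneous triDegWeight d :=
  fun m hm => funext fun t => by
    rw [← hF t hm, Finsupp.weight_apply, Finsupp.weight_apply, Finsupp.sum, Finsupp.sum,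
      Finset.sum_apply]
    rfl

structure IsFormFamily (t : Fin 3) (F : ℕ → MvPolynomial (Fin 3 × Fin 2) K) : Prop where
  isLinearForm : ∀ n, IsLinearForm t (F n)
  ne_smul : ∀ m n, m ≠ n → ∀ s : K, F m ≠ s • F n

theorem IsFormFamily.of_triHomogeneous {t : Fin 3} {F : ℕ → MvPolynomial (Fin 3 × Fin 2) K}
    (hdeg : ∀ n, TriHomogeneous (F n) (Pi.single t 1))
    (hind : ∀ m n, m ≠ n → ∀ s : K, F m ≠ s • F n) : IsFormFamily t F where
  isLinearForm n :=
    (hdeg n).isLinearForm fun h0 => hind n (n + 1) n.succ_ne_self.symm 0 (by simp [h0])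
  ne_smul := hind

theorem IsFormFamily.eq_of_mem_span_pair {t₁ t₂ : Fin 3} (h : t₁ ≠ t₂)
    {F : ℕ → MvPolynomial (Fin 3 × Fin 2) K} {G : MvPolynomial (Fin 3 × Fin 2) K}
    (hF : IsFormFamily t₁ F) (hG : IsLinearForm t₂ G) {m n : ℕ}
    (hm : F m ∈ Ideal.span {F n, G}) : m = n := by
  by_contra hmn
  rcases IsLinearForm.mem_span_pair h (hF.isLinearForm n) hG (hF.isLinearForm m) hm with
    ⟨-, s, hs⟩ | ⟨h', -⟩
  exacts [hF.ne_smul m n hmn s hs, h h']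

section GenProd

variable {A B C : ℕ → MvPolynomial (Fin 3 × Fin 2) K}

theorem genProd_acb (a b c : ℕ) : genProd A C B a c b = genProd A B C a b c := by
  unfold genProd
  ring

theorem genProd_bca (a b c : ℕ) : genProd B C A b c a = genProd A B C a b c := by
  unfold genProd
  ring

theorem mul_genProd (a b c : ℕ) : A a * genProd A B C a b c = genProd A B C (a + 1) b c := by
  unfold genProd
  rw [Finset.prod_range_succ]
  ring

theorem mul_genProd_mid (a b c : ℕ) :
    B b * genProd A B C a b c = genProd A B C a (b + 1) c := by
  unfold genProd
  rw [Finset.prod_range_succ]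
  ring

theorem genProd_dvd_genProd {a b c a' b' c' : ℕ} (ha : a ≤ a') (hb : b ≤ b') (hc : c ≤ c') :
    genProd A B C a b c ∣ genProd A B C a' b' c' := by
  unfold genProd
  gcongr <;> exact Finset.prod_dvd_prod_of_subset _ _ _ (Finset.range_subset_range.mpr ‹_›)

theorem genProd_mem_iff_of_isPrime {P : Ideal (MvPolynomial (Fin 3 × Fin 2) K)} [P.IsPrime]
    (a b c : ℕ) : genProd A B C a b c ∈ P ↔
      (∃ i < a, A i ∈ P) ∨ (∃ j < b, B j ∈ P) ∨ (∃ k < c, C k ∈ P) := by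
  simp [genProd, Ideal.IsPrime.mul_mem_iff_mem_or_mem, Ideal.IsPrime.prod_mem_iff, or_assoc]

theorem genProd_isWeightedHomogeneous (hAdeg : ∀ n, TriHomogeneous (A n) ![1, 0, 0])
    (hBdeg : ∀ n, TriHomogeneous (B n) ![0, 1, 0]) (hCdeg : ∀ n, TriHomogeneous (C n) ![0, 0, 1])
    (a b c : ℕ) : (genProd A B C a b c).IsWeightedHomogeneous triDegWeight ![a, b, c] := by
  have hA := IsWeightedHomogeneous.prod (Finset.range a) _ _ fun i _ =>
    (hAdeg i).isWeightedHomogeneous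
  have hB := IsWeightedHomogeneous.prod (Finset.range b) _ _ fun j _ =>
    (hBdeg j).isWeightedHomogeneous
  have hC := IsWeightedHomogeneous.prod (Finset.range c) _ _ fun k _ =>
    (hCdeg k).isWeightedHomogeneous
  unfold genProd
  convert (hA.mul hB).mul hC using 1
  funext t
  fin_cases t <;> simp

theorem genProd_ne_zero (hA : ∀ n, A n ≠ 0) (hB : ∀ n, B n ≠ 0) (hC : ∀ n, C n ≠ 0)
    (a b c : ℕ) : genProd A B C a b c ≠ 0 := by
  simp [genProd, Finset.prod_ne_zero_iff, hA, hB, hC]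

theorem genProd_notMem_span_image_diff (hAdeg : ∀ n, TriHomogeneous (A n) ![1, 0, 0])
    (hBdeg : ∀ n, TriHomogeneous (B n) ![0, 1, 0]) (hCdeg : ∀ n, TriHomogeneous (C n) ![0, 0, 1])
    (hA : ∀ n, A n ≠ 0) (hB : ∀ n, B n ≠ 0) (hC : ∀ n, C n ≠ 0)
    {D : Set (ℕ × ℕ × ℕ)} {t : ℕ × ℕ × ℕ} (ht : ∀ t' ∈ D, t' ≤ t → t' = t) :
    genProd A B C t.1 t.2.1 t.2.2 ∉ Ideal.span
      ((fun t : ℕ × ℕ × ℕ => genProd A B C t.1 t.2.1 t.2.2) '' D \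
        {genProd A B C t.1 t.2.1 t.2.2}) := by
  refine MvPolynomial.notMem_span_of_isWeightedHomogeneous
    (genProd_isWeightedHomogeneous hAdeg hBdeg hCdeg _ _ _) (genProd_ne_zero hA hB hC _ _ _) ?_
  rintro _ ⟨⟨t', ht', rfl⟩, hne⟩
  refine ⟨_, fun hle => hne ?_, genProd_isWeightedHomogeneous hAdeg hBdeg hCdeg _ _ _⟩
  rw [ht t' ht' (by simpa [Pi.le_def, Fin.forall_fin_succ, Prod.le_def] using hle)]
  rfl

end GenProd

theorem mem_idealPart_iff {F G : ℕ → MvPolynomial (Fin 3 × Fin 2) K} {U : Finset (ℕ × ℕ)}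
    {x : MvPolynomial (Fin 3 × Fin 2) K} :
    x ∈ idealPart F G U ↔ ∀ p ∈ U, x ∈ Ideal.span {F p.1, G p.2} := by
  simp [idealPart]

theorem idealPart_swap (F G : ℕ → MvPolynomial (Fin 3 × Fin 2) K) (U : Finset (ℕ × ℕ)) :
    idealPart G F (U.image Prod.swap) = idealPart F G U := by
  ext x
  simp only [mem_idealPart_iff, Finset.forall_mem_image, Prod.fst_swap, Prod.snd_swap]
  exact forall₂_congr fun p _ => by rw [Set.pair_comm]

def prodSet (A B C : ℕ → MvPolynomial (Fin 3 × Fin 2) K) :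
    Set (MvPolynomial (Fin 3 × Fin 2) K) :=
  {g | ∃ a b c, genProd A B C a b c = g}

section Rotation

variable {A B C : ℕ → MvPolynomial (Fin 3 × Fin 2) K}

theorem prodSet_acb : prodSet A C B = prodSet A B C := by
  ext g
  simp only [prodSet, Set.mem_ofPred_eq, genProd_acb]
  exact ⟨fun ⟨a, c, b, h⟩ => ⟨a, b, c, h⟩, fun ⟨a, b, c, h⟩ => ⟨a, c, b, h⟩⟩

theorem prodSet_bca : prodSet B C A = prodSet A B C := by
  ext g
  simp only [prodSet, Set.mem_ofPred_eq, genProd_bca]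
  exact ⟨fun ⟨b, c, a, h⟩ => ⟨a, b, c, h⟩, fun ⟨a, b, c, h⟩ => ⟨b, c, a, h⟩⟩

theorem lineIdeal_acb (U₃ U₂ U₁ : Finset (ℕ × ℕ)) :
    lineIdeal A C B U₂ U₃ (U₁.image Prod.swap) = lineIdeal A B C U₃ U₂ U₁ := by
  rw [lineIdeal, lineIdeal, idealPart_swap, inf_comm (idealPart A C U₂)]

theorem lineIdeal_bca (U₃ U₂ U₁ : Finset (ℕ × ℕ)) :
    lineIdeal B C A U₁ (U₃.image Prod.swap) (U₂.image Prod.swap) =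
      lineIdeal A B C U₃ U₂ U₁ := by
  rw [lineIdeal, lineIdeal, idealPart_swap, idealPart_swap]
  ac_rfl

end Rotation

theorem mem_minDegs_iff {I : Ideal (MvPolynomial (Fin 3 × Fin 2) K)}
    {f : ℕ × ℕ → MvPolynomial (Fin 3 × Fin 2) K} {d : ℕ × ℕ} :
    d ∈ minDegs I f ↔ Minimal (fun d => f d ∈ I) d := by
  simp only [minDegs, Set.mem_ofPred_eq, minimal_iff, eq_comm]

theorem Dset_subset_genProd_mem {A B C : ℕ → MvPolynomial (Fin 3 × Fin 2) K}
    {U₃ U₂ U₁ : Finset (ℕ × ℕ)} :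
    Dset A B C U₃ U₂ U₁ ⊆ {w | genProd A B C w.1 w.2.1 w.2.2 ∈ lineIdeal A B C U₃ U₂ U₁} := by
  rintro _ ⟨p₃, hp₃, p₂, hp₂, p₁, hp₁, rfl⟩
  refine ⟨⟨Ideal.mem_of_dvd _ ?_ hp₃.1, Ideal.mem_of_dvd _ ?_ hp₂.1⟩,
    Ideal.mem_of_dvd _ ?_ hp₁.1⟩ <;> apply genProd_dvd_genProd <;> simp

section Families

variable {t₁ t₂ t₃ : Fin 3} {A B C : ℕ → MvPolynomial (Fin 3 × Fin 2) K}
  (hA : IsFormFamily t₁ A) (hB : IsFormFamily t₂ B) (hC : IsFormFamily t₃ C)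
  (h₁₂ : t₁ ≠ t₂) (h₁₃ : t₁ ≠ t₃) (h₂₃ : t₂ ≠ t₃)
include hA hB hC h₁₂ h₁₃ h₂₃

theorem genProd_mem_span_pair_iff {a b c i j : ℕ} :
    genProd A B C a b c ∈ Ideal.span {A i, B j} ↔ i < a ∨ j < b := by
  have := IsLinearForm.span_pair_isPrime h₁₂ (hA.isLinearForm i) (hB.isLinearForm j)
  rw [genProd_mem_iff_of_isPrime]
  constructor
  · rintro (⟨i', hi', hmem⟩ | ⟨j', hj', hmem⟩ | ⟨k, -, hmem⟩)
    · exact Or.inl (hA.eq_of_mem_span_pair h₁₂ (hB.isLinearForm j) hmem ▸ hi')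
    · rw [Set.pair_comm] at hmem
      exact Or.inr (hB.eq_of_mem_span_pair h₁₂.symm (hA.isLinearForm i) hmem ▸ hj')
    · rcases IsLinearForm.mem_span_pair h₁₂ (hA.isLinearForm i) (hB.isLinearForm j)
        (hC.isLinearForm k) hmem with ⟨h, -⟩ | ⟨h, -⟩
      exacts [absurd h.symm h₁₃, absurd h.symm h₂₃]
  · rintro (h | h)
    · exact Or.inl ⟨i, h, Ideal.subset_span (by simp)⟩
    · exact Or.inr (Or.inl ⟨j, h, Ideal.subset_span (by simp)⟩)

theorem genProd_mem_idealPart_iff {a b c : ℕ} {U : Finset (ℕ × ℕ)} :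
    genProd A B C a b c ∈ idealPart A B U ↔ ∀ p ∈ U, p.1 < a ∨ p.2 < b := by
  simp only [mem_idealPart_iff, genProd_mem_span_pair_iff hA hB hC h₁₂ h₁₃ h₂₃]

theorem genProd_mem_idealPart_iff_notMem {a b c : ℕ} {U : Finset (ℕ × ℕ)}
    (hU : IsLowerSet (U : Set (ℕ × ℕ))) :
    genProd A B C a b c ∈ idealPart A B U ↔ (a, b) ∉ U := by
  rw [genProd_mem_idealPart_iff hA hB hC h₁₂ h₁₃ h₂₃]
  refine ⟨fun h hab => by simpa using h _ hab, fun hab p hp => ?_⟩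
  by_contra! hle
  exact hab (hU (Prod.mk_le_mk.mpr hle) hp)

theorem genProd_mem_lineIdeal_iff {a b c : ℕ} {U₃ U₂ U₁ : Finset (ℕ × ℕ)} :
    genProd A B C a b c ∈ lineIdeal A B C U₃ U₂ U₁ ↔ (∀ p ∈ U₃, p.1 < a ∨ p.2 < b) ∧
      (∀ p ∈ U₂, p.1 < a ∨ p.2 < c) ∧ (∀ p ∈ U₁, p.1 < b ∨ p.2 < c) := by
  rw [lineIdeal, Ideal.mem_inf, Ideal.mem_inf, and_assoc]
  refine and_congr (genProd_mem_idealPart_iff hA hB hC h₁₂ h₁₃ h₂₃) (and_congr ?_ ?_)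
  · rw [← genProd_acb]
    exact genProd_mem_idealPart_iff hA hC hB h₁₃ h₁₂ h₂₃.symm
  · rw [← genProd_bca]
    exact genProd_mem_idealPart_iff hB hC hA h₂₃ h₁₂.symm h₁₃.symm

theorem lineIdeal_le_span_of_erase {U₃ U₂ U₁ : Finset (ℕ × ℕ)}
    (hU₃ : IsLowerSet (U₃ : Set (ℕ × ℕ))) (hne : U₃.Nonempty)
    (ih : ∀ p ∈ U₃, IsLowerSet ((U₃.erase p : Finset (ℕ × ℕ)) : Set (ℕ × ℕ)) →
      lineIdeal A B C (U₃.erase p) U₂ U₁ ≤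
        Ideal.span (↑(lineIdeal A B C (U₃.erase p) U₂ U₁) ∩ prodSet A B C)) :
    lineIdeal A B C U₃ U₂ U₁ ≤ Ideal.span (↑(lineIdeal A B C U₃ U₂ U₁) ∩ prodSet A B C) := by
  classical
  obtain ⟨p, hp⟩ := Finset.exists_maximal hne
  have hU₃' := isLowerSet_erase_of_maximal hU₃ hp
  set I' := lineIdeal A B C (U₃.erase p) U₂ U₁
  have hI : lineIdeal A B C U₃ U₂ U₁ = I' ⊓ Ideal.span {A p.1, B p.2} := by
    conv_lhs => rw [← Finset.insert_erase hp.prop]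
    ext x
    simp only [I', lineIdeal, idealPart, Finset.iInf_insert, Ideal.mem_inf]
    tauto
  obtain ⟨N, hN⟩ : ∃ N, ∀ q ∈ U₂ ∪ U₁, q.2 < N :=
    ⟨(U₂ ∪ U₁).sup Prod.snd + 1, fun q hq => Nat.lt_succ_of_le (Finset.le_sup hq)⟩
  have hex : ∃ c, genProd A B C p.1 p.2 c ∈ I' := by
    refine ⟨N, (genProd_mem_lineIdeal_iff hA hB hC h₁₂ h₁₃ h₂₃).mpr ⟨fun q hq => ?_,
      fun q hq => Or.inr (hN q (by simp [hq])), fun q hq => Or.inr (hN q (by simp [hq]))⟩⟩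
    obtain ⟨hqp, hq⟩ := Finset.mem_erase.mp hq
    by_contra! hpq
    exact hqp (hp.eq_of_le hq (Prod.mk_le_mk.mpr hpq)).symm
  rw [hI]
  refine Ideal.inf_span_pair_le_span_inter
    (IsLinearForm.span_pair_isPrime h₁₂ (hA.isLinearForm _) (hB.isLinearForm _))
    (ih p hp.prop hU₃') (Nat.find_spec hex) ?_ ⟨p.1 + 1, p.2, _, (mul_genProd _ _ _).symm⟩
    ⟨p.1, p.2 + 1, _, (mul_genProd_mid _ _ _).symm⟩ ?_
  · simp [genProd_mem_span_pair_iff hA hB hC h₁₂ h₁₃ h₂₃]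
  · rintro _ ⟨hgI', a, b, c, rfl⟩ hgP
    rw [genProd_mem_span_pair_iff hA hB hC h₁₂ h₁₃ h₂₃, not_or, not_lt, not_lt] at hgP
    have hab : (a, b) = p := by
      by_contra hap
      exact (genProd_mem_idealPart_iff_notMem hA hB hC h₁₂ h₁₃ h₂₃ hU₃').mp hgI'.1.1
        (Finset.mem_erase.mpr ⟨hap, hU₃ (Prod.mk_le_mk.mpr hgP) hp.prop⟩)
    subst hab
    exact genProd_dvd_genProd le_rfl le_rfl (Nat.find_min' hex hgI')

theorem lineIdeal_le_span_inter_prodSet {U₃ U₂ U₁ : Finset (ℕ × ℕ)}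
    (hU₃ : IsLowerSet (U₃ : Set (ℕ × ℕ))) (hU₂ : IsLowerSet (U₂ : Set (ℕ × ℕ)))
    (hU₁ : IsLowerSet (U₁ : Set (ℕ × ℕ))) :
    lineIdeal A B C U₃ U₂ U₁ ≤ Ideal.span (↑(lineIdeal A B C U₃ U₂ U₁) ∩ prodSet A B C) := by
  induction hn : U₃.card + U₂.card + U₁.card using Nat.strong_induction_on
    generalizing t₁ t₂ t₃ A B C U₃ U₂ U₁ with
  | _ n ih =>
  rcases U₃.eq_empty_or_nonempty with rfl | hne₃
  · rcases U₂.eq_empty_or_nonempty with rfl | hne₂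
    · rcases U₁.eq_empty_or_nonempty with rfl | hne₁
      · have hone : (1 : MvPolynomial (Fin 3 × Fin 2) K) ∈
            Ideal.span (↑(lineIdeal A B C ∅ ∅ ∅) ∩ prodSet A B C) :=
          Ideal.subset_span ⟨by simp [lineIdeal, idealPart], 0, 0, 0, by simp [genProd]⟩
        simp [(Ideal.eq_top_iff_one _).mpr hone]
      · rw [← lineIdeal_bca, ← prodSet_bca]
        refine lineIdeal_le_span_of_erase hB hC hA h₂₃ h₁₂.symm h₁₃.symm hU₁ hne₁
          fun p hp hU₁' => ih _ ?_ hB hC hA h₂₃ h₁₂.symm h₁₃.symm hU₁'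
            (isLowerSet_image_swap hU₃) (isLowerSet_image_swap hU₂) rfl
        simp [← hn, Finset.card_erase_lt_of_mem hp]
    · rw [← lineIdeal_acb, ← prodSet_acb]
      refine lineIdeal_le_span_of_erase hA hC hB h₁₃ h₁₂ h₂₃.symm hU₂ hne₂ fun p hp hU₂' =>
        ih _ ?_ hA hC hB h₁₃ h₁₂ h₂₃.symm hU₂' hU₃ (isLowerSet_image_swap hU₁) rfl
      rw [← hn, Finset.card_image_of_injective _ Prod.swap_injective]
      have := Finset.card_erase_lt_of_mem hp
      simp only [Finset.card_empty]
      omega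
  · refine lineIdeal_le_span_of_erase hA hB hC h₁₂ h₁₃ h₂₃ hU₃ hne₃ fun p hp hU₃' =>
      ih _ ?_ hA hB hC h₁₂ h₁₃ h₂₃ hU₃' hU₂ hU₁ rfl
    have := Finset.card_erase_lt_of_mem hp
    omega

theorem exists_mem_Dhat_le {U₃ U₂ U₁ : Finset (ℕ × ℕ)} {w : ℕ × ℕ × ℕ}
    (hw : genProd A B C w.1 w.2.1 w.2.2 ∈ lineIdeal A B C U₃ U₂ U₁) :
    ∃ t ∈ Dhat A B C U₃ U₂ U₁, t ≤ w := by
  rw [lineIdeal, Ideal.mem_inf, Ideal.mem_inf] at hw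
  obtain ⟨⟨hw₃, hw₂⟩, hw₁⟩ := hw
  -- membership in each `idealPart` only depends on the two relevant exponents
  have h₃ : genProd A B C w.1 w.2.1 0 ∈ idealPart A B U₃ := by
    rwa [genProd_mem_idealPart_iff hA hB hC h₁₂ h₁₃ h₂₃] at hw₃ ⊢
  have h₂ : genProd A B C w.1 0 w.2.2 ∈ idealPart A C U₂ := by
    rw [← genProd_acb] at hw₂ ⊢
    rwa [genProd_mem_idealPart_iff hA hC hB h₁₃ h₁₂ h₂₃.symm] at hw₂ ⊢
  have h₁ : genProd A B C 0 w.2.1 w.2.2 ∈ idealPart B C U₁ := by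
    rw [← genProd_bca] at hw₁ ⊢
    rwa [genProd_mem_idealPart_iff hB hC hA h₂₃ h₁₂.symm h₁₃.symm] at hw₁ ⊢
  obtain ⟨p₃, hp₃w, hp₃⟩ := exists_minimal_le_of_wellFoundedLT
    (fun d : ℕ × ℕ => genProd A B C d.1 d.2 0 ∈ idealPart A B U₃) (w.1, w.2.1) h₃
  obtain ⟨p₂, hp₂w, hp₂⟩ := exists_minimal_le_of_wellFoundedLT
    (fun d : ℕ × ℕ => genProd A B C d.1 0 d.2 ∈ idealPart A C U₂) (w.1, w.2.2) h₂
  obtain ⟨p₁, hp₁w, hp₁⟩ := exists_minimal_le_of_wellFoundedLT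
    (fun d : ℕ × ℕ => genProd A B C 0 d.1 d.2 ∈ idealPart B C U₁) (w.2.1, w.2.2) h₁
  obtain ⟨t, htw, ht⟩ := exists_minimal_le_of_wellFoundedLT (· ∈ Dset A B C U₃ U₂ U₁) _
    ⟨p₃, mem_minDegs_iff.mpr hp₃, p₂, mem_minDegs_iff.mpr hp₂, p₁, mem_minDegs_iff.mpr hp₁, rfl⟩
  refine ⟨t, ⟨ht.prop, fun t' ht' hle => ht.eq_of_le ht' hle⟩, htw.trans ?_⟩
  obtain ⟨hp₃₁, hp₃₂⟩ := hp₃w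
  obtain ⟨hp₂₁, hp₂₂⟩ := hp₂w
  obtain ⟨hp₁₁, hp₁₂⟩ := hp₁w
  exact ⟨max_le hp₃₁ hp₂₁, max_le hp₃₂ hp₁₁, max_le hp₂₂ hp₁₂⟩

theorem span_image_Dhat {U₃ U₂ U₁ : Finset (ℕ × ℕ)} :
    Ideal.span ((fun t : ℕ × ℕ × ℕ => genProd A B C t.1 t.2.1 t.2.2) '' Dhat A B C U₃ U₂ U₁) =
      Ideal.span ((fun t : ℕ × ℕ × ℕ => genProd A B C t.1 t.2.1 t.2.2) ''
        {w | genProd A B C w.1 w.2.1 w.2.2 ∈ lineIdeal A B C U₃ U₂ U₁}) := by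
  refine le_antisymm
    (Ideal.span_mono (Set.image_mono fun t ht => Dset_subset_genProd_mem ht.1)) ?_
  rw [Ideal.span_le]
  rintro _ ⟨w, hw, rfl⟩
  obtain ⟨t, ht, htw⟩ := exists_mem_Dhat_le hA hB hC h₁₂ h₁₃ h₂₃ hw
  exact Ideal.mem_of_dvd _ (genProd_dvd_genProd htw.1 htw.2.1 htw.2.2)
    (Ideal.subset_span ⟨t, ht, rfl⟩)

theorem span_genProd_mem_lineIdeal_eq {U₃ U₂ U₁ : Finset (ℕ × ℕ)}
    (hU₃ : IsLowerSet (U₃ : Set (ℕ × ℕ))) (hU₂ : IsLowerSet (U₂ : Set (ℕ × ℕ)))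
    (hU₁ : IsLowerSet (U₁ : Set (ℕ × ℕ))) :
    Ideal.span ((fun t : ℕ × ℕ × ℕ => genProd A B C t.1 t.2.1 t.2.2) ''
        {w | genProd A B C w.1 w.2.1 w.2.2 ∈ lineIdeal A B C U₃ U₂ U₁}) =
      lineIdeal A B C U₃ U₂ U₁ := by
  refine le_antisymm (Ideal.span_le.mpr ?_) ?_
  · rintro _ ⟨w, hw, rfl⟩
    exact hw
  · refine (lineIdeal_le_span_inter_prodSet hA hB hC h₁₂ h₁₃ h₂₃ hU₃ hU₂ hU₁).trans
      (Ideal.span_mono ?_)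
    rintro _ ⟨hg, a, b, c, rfl⟩
    exact ⟨(a, b, c), hg, rfl⟩

end Families

/-- if `X` is a Ferrers variety of lines (all three index sets are
downward closed), then `I_X` is minimally generated by the products
`∏_{i ≤ a} A_i ∏_{j ≤ b} B_j ∏_{k ≤ c} C_k` for `(a,b,c) ∈ D̂(X)`. -/
theorem ferrers_lineIdeal_minimal_generators
    (A B C : ℕ → MvPolynomial (Fin 3 × Fin 2) K)
    (hAdeg : ∀ n, TriHomogeneous (A n) ![1, 0, 0])
    (hBdeg : ∀ n, TriHomogeneous (B n) ![0, 1, 0])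
    (hCdeg : ∀ n, TriHomogeneous (C n) ![0, 0, 1])
    (hAind : ∀ m n, m ≠ n → ∀ s : K, A m ≠ s • A n)
    (hBind : ∀ m n, m ≠ n → ∀ s : K, B m ≠ s • B n)
    (hCind : ∀ m n, m ≠ n → ∀ s : K, C m ≠ s • C n)
    (U₃ U₂ U₁ : Finset (ℕ × ℕ))
    (hU₃ : ∀ p ∈ U₃, ∀ q : ℕ × ℕ, q ≤ p → q ∈ U₃)
    (hU₂ : ∀ p ∈ U₂, ∀ q : ℕ × ℕ, q ≤ p → q ∈ U₂)
    (hU₁ : ∀ p ∈ U₁, ∀ q : ℕ × ℕ, q ≤ p → q ∈ U₁) :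
    Ideal.span ((fun t : ℕ × ℕ × ℕ => genProd A B C t.1 t.2.1 t.2.2) ''
        Dhat A B C U₃ U₂ U₁) = lineIdeal A B C U₃ U₂ U₁ ∧
      ∀ g ∈ (fun t : ℕ × ℕ × ℕ => genProd A B C t.1 t.2.1 t.2.2) '' Dhat A B C U₃ U₂ U₁,
        Ideal.span (((fun t : ℕ × ℕ × ℕ => genProd A B C t.1 t.2.1 t.2.2) ''
          Dhat A B C U₃ U₂ U₁) \ {g}) ≠ lineIdeal A B C U₃ U₂ U₁ := by
  have hA : IsFormFamily 0 A := .of_triHomogeneous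
    (fun n => (by decide : (![1, 0, 0] : Fin 3 → ℕ) = Pi.single 0 1) ▸ hAdeg n) hAind
  have hB : IsFormFamily 1 B := .of_triHomogeneous
    (fun n => (by decide : (![0, 1, 0] : Fin 3 → ℕ) = Pi.single 1 1) ▸ hBdeg n) hBind
  have hC : IsFormFamily 2 C := .of_triHomogeneous
    (fun n => (by decide : (![0, 0, 1] : Fin 3 → ℕ) = Pi.single 2 1) ▸ hCdeg n) hCind
  have hspan := (span_image_Dhat hA hB hC (by decide) (by decide) (by decide)).trans
    (span_genProd_mem_lineIdeal_eq hA hB hC (by decide) (by decide) (by decide)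
      (fun _ q hq hp => hU₃ _ hp q hq) (fun _ q hq hp => hU₂ _ hp q hq)
      (fun _ q hq hp => hU₁ _ hp q hq))
  refine ⟨hspan, ?_⟩
  rintro _ ⟨t, ht, rfl⟩ hgen
  refine genProd_notMem_span_image_diff (D := Dhat A B C U₃ U₂ U₁) hAdeg hBdeg hCdeg
    (fun n => (hA.isLinearForm n).1) (fun n => (hB.isLinearForm n).1)
    (fun n => (hC.isLinearForm n).1) (fun t' ht' => ht.2 t' ht'.1) ?_
  rw [hgen, ← hspan]
  exact Ideal.subset_span ⟨t, ht, rfl⟩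

end
end

section
/- Let X be a variety of lines of ℙ¹×ℙ¹×ℙ¹ whose ideal is I_X = (F₁, F₂) with deg F₁ = a·e_i and deg F₂ = b·e_j + c·e_k where {i,j,k} = {1,2,3}. Then F₁, F₂ is a regular sequence; conversely, if I_X is generated by a regular sequence of length 2, then the two generators have degrees of this form (one supported on a single coordinate direction, the other on the complementary two). -/
/-!
For every direction `t`, the ideal `(L, L')` of each line of `X` contains a linear form not of
direction `t`; multiplying these gives, for each `t`, a nonzero element of `I_X` free of the
variables of direction `t`. A polynomial dividing all three of them is a constant. Hence `I_X` is not
principal, and generators of tridegrees `a·e_i` and `b·e_j + c·e_k` have no common factor, so in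
the factorial ring `K[x]` they form a regular sequence. Conversely, if `I_X = (F₁, F₂)`, no
direction `t` occurs in both tridegrees, since a `t`-free element cannot lie in an ideal generated
by forms of positive `t`-degree; two disjoint nonempty supports in three directions force one of
them to be a single direction.
-/

open MvPolynomial

noncomputable section

variable {K : Type*} [Field K]

section

variable {R : Type*}

theorem isRegular_pair_of_isRelPrime [CommRing R] [IsDomain R] [DecompositionMonoid R]
    {a b : R} (ha : a ≠ 0) (hab : IsRelPrime a b) (hI : Ideal.span {a, b} ≠ ⊤) :
    RingTheory.Sequence.IsRegular R [a, b] := by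
  rw [RingTheory.Sequence.isRegular_iff]
  refine ⟨.cons (IsRegular.of_ne_zero ha).isSMulRegular (.cons ?_ (.nil _ _)), ?_⟩
  · rw [isSMulRegular_quotient_iff_mem_of_smul_mem]
    intro x hx
    obtain ⟨y, -, hy⟩ := (Submodule.mem_smul_pointwise_iff_exists _ _ _).mp hx
    obtain ⟨z, hz⟩ := hab.dvd_of_dvd_mul_left ⟨y, hy.symm⟩
    exact (Submodule.mem_smul_pointwise_iff_exists _ _ _).mpr ⟨z, trivial, hz.symm⟩
  · rwa [Ideal.ofList_cons, Ideal.ofList_singleton, ← Ideal.span_insert, smul_eq_mul,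
      Ideal.mul_top, ne_comm]

theorem Ideal.exists_mem_inf_of_mem_submonoid [CommSemiring R] {I J : Ideal R} {S : Submonoid R}
    (hI : ∃ x ∈ I, x ∈ S) (hJ : ∃ y ∈ J, y ∈ S) : ∃ z ∈ I ⊓ J, z ∈ S := by
  obtain ⟨x, hxI, hxS⟩ := hI
  obtain ⟨y, hyJ, hyS⟩ := hJ
  exact ⟨x * y, ⟨I.mul_mem_right y hxI, J.mul_mem_left x hyJ⟩, S.mul_mem hxS hyS⟩

theorem Ideal.exists_mem_biInf_of_mem_submonoid [CommSemiring R] {ι : Type*} {S : Submonoid R}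
    (s : Finset ι) {J : ι → Ideal R} (h : ∀ i ∈ s, ∃ x ∈ J i, x ∈ S) :
    ∃ x ∈ ⨅ i ∈ s, J i, x ∈ S := by
  classical
  induction s using Finset.induction_on with
  | empty => exact ⟨1, by simp, S.one_mem⟩
  | insert i s _ ih =>
    rw [Finset.iInf_insert]
    exact Ideal.exists_mem_inf_of_mem_submonoid (h i (s.mem_insert_self i))
      (ih fun j hj => h j (Finset.mem_insert_of_mem hj))

end

namespace MvPolynomial

variable {σ R : Type*}

theorem vars_subset_of_dvd [CommSemiring R] [NoZeroDivisors R] {p q : MvPolynomial σ R}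
    (h : p ∣ q) (hq : q ≠ 0) : p.vars ⊆ q.vars := by
  classical
  obtain ⟨r, rfl⟩ := h
  rw [vars_def, vars_def, degrees_mul_eq (left_ne_zero_of_mul hq) (right_ne_zero_of_mul hq)]
  exact Multiset.toFinset_subset.mpr (Multiset.subset_of_le le_self_add)

theorem isWeightedHomogeneous_zero_iff_forall_mem_vars [CommSemiring R] {w : σ → ℕ}
    {p : MvPolynomial σ R} : p.IsWeightedHomogeneous w 0 ↔ ∀ v ∈ p.vars, w v = 0 := by
  simp only [IsWeightedHomogeneous, mem_vars_iff_mem_support, Finsupp.weight_apply,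
    Finsupp.sum, Finset.sum_eq_zero_iff, smul_eq_mul, mul_eq_zero, Finsupp.mem_support_iff,
    mem_support_iff]
  exact ⟨fun h v ⟨d, hd, hdv⟩ => (h hd v hdv).resolve_left hdv,
    fun h d hd v hdv => Or.inr (h v ⟨d, hd, hdv⟩)⟩

theorem IsWeightedHomogeneous.zero_of_dvd [CommSemiring R] [NoZeroDivisors R] {w : σ → ℕ}
    {p q : MvPolynomial σ R} (hq : q.IsWeightedHomogeneous w 0) (hq0 : q ≠ 0) (h : p ∣ q) :
    p.IsWeightedHomogeneous w 0 :=
  isWeightedHomogeneous_zero_iff_forall_mem_vars.mpr fun v hv =>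
    isWeightedHomogeneous_zero_iff_forall_mem_vars.mp hq v (vars_subset_of_dvd h hq0 hv)

theorem IsWeightedHomogeneous.coeff_mul_eq_zero [CommSemiring R] {w : σ → ℕ}
    {F : MvPolynomial σ R} {n : ℕ} (hF : F.IsWeightedHomogeneous w n) (hn : n ≠ 0)
    (g : MvPolynomial σ R) {μ : σ →₀ ℕ} (hμ : Finsupp.weight w μ = 0) :
    coeff μ (g * F) = 0 := by
  classical
  rw [coeff_mul]
  refine Finset.sum_eq_zero fun x hx => ?_
  have hx2 : Finsupp.weight w x.2 = 0 := by
    rw [← Finset.HasAntidiagonal.mem_antidiagonal.mp hx, map_add] at hμ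
    omega
  rw [hF.coeff_eq_zero x.2 (by rw [hx2]; exact hn.symm), mul_zero]

theorem eq_zero_of_mem_span_pair [CommSemiring R] {w : σ → ℕ} {F₁ F₂ z : MvPolynomial σ R}
    {n₁ n₂ : ℕ} (h₁ : F₁.IsWeightedHomogeneous w n₁) (h₂ : F₂.IsWeightedHomogeneous w n₂)
    (hn₁ : n₁ ≠ 0) (hn₂ : n₂ ≠ 0) (hz : z.IsWeightedHomogeneous w 0)
    (hmem : z ∈ Ideal.span {F₁, F₂}) : z = 0 := by
  obtain ⟨g₁, g₂, rfl⟩ := Ideal.mem_span_pair.mp hmem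
  ext μ
  by_cases hμ : Finsupp.weight w μ = 0
  · rw [coeff_add, h₁.coeff_mul_eq_zero hn₁ g₁ hμ, h₂.coeff_mul_eq_zero hn₂ g₂ hμ, add_zero,
      coeff_zero]
  · rw [hz.coeff_eq_zero μ hμ, coeff_zero]

theorem span_pair_ne_top_of_constantCoeff [CommRing R] [Nontrivial R]
    {X Y : MvPolynomial σ R} (hX : constantCoeff X = 0) (hY : constantCoeff Y = 0) :
    Ideal.span {X, Y} ≠ ⊤ :=
  ne_top_of_le_ne_top (RingHom.ker_ne_top constantCoeff) <|
    Ideal.span_le.mpr (Set.insert_subset hX (Set.singleton_subset_iff.mpr hY))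

def nonzeroWeightZero [CommSemiring R] [NoZeroDivisors R] [Nontrivial R] (w : σ → ℕ) :
    Submonoid (MvPolynomial σ R) where
  carrier := {p | p ≠ 0 ∧ p.IsWeightedHomogeneous w 0}
  mul_mem' ha hb := ⟨mul_ne_zero ha.1 hb.1, by simpa using ha.2.mul hb.2⟩
  one_mem' := ⟨one_ne_zero, isWeightedHomogeneous_one R w⟩

end MvPolynomial

theorem Fin3.exists_forall_ne_eq_zero (d₁ d₂ : Fin 3 → ℕ) (h : ∀ t, d₁ t = 0 ∨ d₂ t = 0) :
    ∃ i, (∀ t ≠ i, d₁ t = 0) ∨ (∀ t ≠ i, d₂ t = 0) := by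
  classical
  set S₁ := Finset.univ.filter (d₁ · ≠ 0)
  set S₂ := Finset.univ.filter (d₂ · ≠ 0)
  have hdisj : Disjoint S₁ S₂ := Finset.disjoint_filter.mpr fun t _ h₁ h₂ => (h t).elim h₁ h₂
  have hcard : S₁.card + S₂.card ≤ 3 := by
    rw [← Finset.card_union_of_disjoint hdisj]
    exact (Finset.card_le_univ _).trans_eq (Fintype.card_fin 3)
  have key : ∀ S : Finset (Fin 3), S.card ≤ 1 → ∃ i, ∀ t ≠ i, t ∉ S := fun S hS =>
    (Finset.card_le_one_iff_subset_singleton.mp hS).imp fun i hi t hti ht =>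
      hti (Finset.mem_singleton.mp (hi ht))
  rcases le_or_gt S₁.card 1 with h₁ | h₁
  · exact (key S₁ h₁).imp fun i hi => Or.inl fun t ht => by simpa [S₁] using hi t ht
  · exact (key S₂ (by omega)).imp fun i hi => Or.inr fun t ht => by simpa [S₂] using hi t ht

theorem Fin3.exists_complement :
    ∀ i : Fin 3, ∃ j k : Fin 3, i ≠ j ∧ i ≠ k ∧ j ≠ k ∧ ∀ t, t = i ∨ t = j ∨ t = k := by
  decide

theorem MvPolynomial.eq_C_of_forall_isWeightedHomogeneous_triWeight {R : Type*} [CommSemiring R]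
    {p : MvPolynomial (Fin 3 × Fin 2) R} (h : ∀ t, p.IsWeightedHomogeneous (triWeight t) 0) :
    p = C (coeff 0 p) :=
  vars_eq_empty_iff_eq_C.mp <| Finset.eq_empty_of_forall_notMem fun v hv => by
    simpa [triWeight] using isWeightedHomogeneous_zero_iff_forall_mem_vars.mp (h v.1) v hv

theorem TriHomogeneous.constantCoeff_eq_zero {F : MvPolynomial (Fin 3 × Fin 2) K}
    {d : Fin 3 → ℕ} (h : TriHomogeneous F d) {t : Fin 3} (ht : d t ≠ 0) : constantCoeff F = 0 := by
  rw [constantCoeff_eq]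
  exact (h t).coeff_eq_zero 0 (by simpa using ht.symm)

theorem TriHomogeneous.mem_nonzeroWeightZero {F : MvPolynomial (Fin 3 × Fin 2) K}
    {d : Fin 3 → ℕ} (h : TriHomogeneous F d) (hF : F ≠ 0) {t : Fin 3} (ht : d t = 0) :
    F ∈ nonzeroWeightZero (triWeight t) :=
  ⟨hF, ht ▸ h t⟩

theorem isUnit_of_forall_dvd_mem_nonzeroWeightZero {d : MvPolynomial (Fin 3 × Fin 2) K}
    (h : ∀ t, ∃ z ∈ nonzeroWeightZero (triWeight t), d ∣ z) : IsUnit d := by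
  obtain ⟨z, ⟨hz0, -⟩, hdz⟩ := h 0
  have hd0 : d ≠ 0 := ne_zero_of_dvd_ne_zero hz0 hdz
  have hd : ∀ t, d.IsWeightedHomogeneous (triWeight t) 0 := fun t => by
    obtain ⟨z, ⟨hz0, hz⟩, hdz⟩ := h t
    exact hz.zero_of_dvd hz0 hdz
  rw [eq_C_of_forall_isWeightedHomogeneous_triWeight hd, ne_eq, C_eq_zero] at hd0
  rw [eq_C_of_forall_isWeightedHomogeneous_triWeight hd]
  exact (isUnit_iff_ne_zero.mpr hd0).map C

theorem isRelPrime_of_forall_isWeightedHomogeneous_zero {F₁ F₂ : MvPolynomial (Fin 3 × Fin 2) K}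
    (hF₁ : F₁ ≠ 0) (hF₂ : F₂ ≠ 0)
    (h : ∀ t, F₁.IsWeightedHomogeneous (triWeight t) 0 ∨ F₂.IsWeightedHomogeneous (triWeight t) 0) :
    IsRelPrime F₁ F₂ := fun _ h₁ h₂ =>
  isUnit_of_forall_dvd_mem_nonzeroWeightZero fun t =>
    (h t).elim (fun h => ⟨F₁, ⟨hF₁, h⟩, h₁⟩) (fun h => ⟨F₂, ⟨hF₂, h⟩, h₂⟩)

def HasDirectionFreeElements (I : Ideal (MvPolynomial (Fin 3 × Fin 2) K)) : Prop :=
  ∀ t, ∃ z ∈ I, z ∈ nonzeroWeightZero (triWeight t)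

section HasDirectionFreeElements

variable {I : Ideal (MvPolynomial (Fin 3 × Fin 2) K)} {F₁ F₂ : MvPolynomial (Fin 3 × Fin 2) K}

theorem HasDirectionFreeElements.ne_span_singleton (hz : HasDirectionFreeElements I)
    (hI : I ≠ ⊤) (G : MvPolynomial (Fin 3 × Fin 2) K) :
    I ≠ Ideal.span {G} := by
  rintro rfl
  refine hI (Ideal.span_singleton_eq_top.mpr
    (isUnit_of_forall_dvd_mem_nonzeroWeightZero fun t => ?_))
  obtain ⟨z, hzG, hz⟩ := hz t
  exact ⟨z, hz, Ideal.mem_span_singleton.mp hzG⟩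

theorem HasDirectionFreeElements.ne_zero_of_eq_span_pair (hz : HasDirectionFreeElements I)
    (hI : I ≠ ⊤) (hspan : I = Ideal.span {F₁, F₂}) :
    F₁ ≠ 0 ∧ F₂ ≠ 0 := by
  constructor <;> rintro rfl
  · exact hz.ne_span_singleton hI F₂ (hspan.trans Ideal.span_insert_zero)
  · refine hz.ne_span_singleton hI F₁ (hspan.trans ?_)
    rw [Ideal.span_pair_comm, Ideal.span_insert_zero]

theorem HasDirectionFreeElements.isRegular_of_eq_span_pair (hz : HasDirectionFreeElements I)
    (hI : I ≠ ⊤) {i j k : Fin 3} {a b c : ℕ}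
    (hij : i ≠ j) (hik : i ≠ k) (h₁ : TriHomogeneous F₁ (fun t => if t = i then a else 0))
    (h₂ : TriHomogeneous F₂ (fun t => if t = j then b else if t = k then c else 0))
    (hspan : I = Ideal.span {F₁, F₂}) :
    RingTheory.Sequence.IsRegular (MvPolynomial (Fin 3 × Fin 2) K) [F₁, F₂] := by
  obtain ⟨hF₁, hF₂⟩ := hz.ne_zero_of_eq_span_pair hI hspan
  refine isRegular_pair_of_isRelPrime hF₁
    (isRelPrime_of_forall_isWeightedHomogeneous_zero hF₁ hF₂ fun t => ?_) (hspan ▸ hI)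
  by_cases ht : t = i
  · subst ht
    simpa [hij, hik] using Or.inr (h₂ t)
  · simpa [ht] using Or.inl (h₁ t)

theorem HasDirectionFreeElements.tridegree_eq_zero_or (hz : HasDirectionFreeElements I)
    {d₁ d₂ : Fin 3 → ℕ}
    (h₁ : TriHomogeneous F₁ d₁) (h₂ : TriHomogeneous F₂ d₂) (hspan : I = Ideal.span {F₁, F₂})
    (t : Fin 3) : d₁ t = 0 ∨ d₂ t = 0 := by
  by_contra! hd
  obtain ⟨z, hzI, hz0, hzw⟩ := hz t
  exact hz0 (eq_zero_of_mem_span_pair (h₁ t) (h₂ t) hd.1 hd.2 hzw (hspan ▸ hzI))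

theorem exists_tridegree_ne_zero_of_mem (hI : I ≠ ⊤) {F : MvPolynomial (Fin 3 × Fin 2) K}
    {d : Fin 3 → ℕ} (hFI : F ∈ I) (hF : F ≠ 0) (h : TriHomogeneous F d) : ∃ t, d t ≠ 0 := by
  by_contra! hd
  exact hI (I.eq_top_of_isUnit_mem hFI
    (isUnit_of_forall_dvd_mem_nonzeroWeightZero fun t =>
      ⟨F, h.mem_nonzeroWeightZero hF (hd t), dvd_rfl⟩))

theorem TriHomogeneous.exists_shape {d₁ d₂ : Fin 3 → ℕ} (i : Fin 3)
    (h₁ : TriHomogeneous F₁ d₁) (h₂ : TriHomogeneous F₂ d₂) (hd₁ : ∀ t ≠ i, d₁ t = 0)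
    (hd₂ : d₂ i = 0) :
    ∃ j k : Fin 3, i ≠ j ∧ i ≠ k ∧ j ≠ k ∧
      TriHomogeneous F₁ (fun t => if t = i then d₁ i else 0) ∧
      TriHomogeneous F₂ (fun t => if t = j then d₂ j else if t = k then d₂ k else 0) := by
  obtain ⟨j, k, hij, hik, hjk, hcover⟩ := Fin3.exists_complement i
  refine ⟨j, k, hij, hik, hjk, ?_, ?_⟩
  · convert h₁ using 1
    funext t
    split_ifs with ht
    · rw [ht]
    · exact (hd₁ t ht).symm
  · convert h₂ using 1
    funext t
    rcases hcover t with rfl | rfl | rfl <;> simp [*, Ne.symm hjk]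

theorem HasDirectionFreeElements.exists_shape_of_eq_span_pair
    (hz : HasDirectionFreeElements I) (hI : I ≠ ⊤) {d₁ d₂ : Fin 3 → ℕ}
    (h₁ : TriHomogeneous F₁ d₁) (h₂ : TriHomogeneous F₂ d₂) (hspan : I = Ideal.span {F₁, F₂}) :
    ∃ F₁ F₂ : MvPolynomial (Fin 3 × Fin 2) K, ∃ i j k : Fin 3, ∃ a b c : ℕ,
      i ≠ j ∧ i ≠ k ∧ j ≠ k ∧
      TriHomogeneous F₁ (fun t => if t = i then a else 0) ∧
      TriHomogeneous F₂ (fun t => if t = j then b else if t = k then c else 0) ∧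
      I = Ideal.span {F₁, F₂} ∧
      RingTheory.Sequence.IsRegular (MvPolynomial (Fin 3 × Fin 2) K) [F₁, F₂] := by
  wlog hd₁ : ∃ i, ∀ t ≠ i, d₁ t = 0 generalizing F₁ F₂ d₁ d₂
  · obtain ⟨i, hi | hi⟩ := Fin3.exists_forall_ne_eq_zero d₁ d₂
      (hz.tridegree_eq_zero_or h₁ h₂ hspan)
    · exact this h₁ h₂ hspan ⟨i, hi⟩
    · exact this h₂ h₁ (hspan.trans Ideal.span_pair_comm) ⟨i, hi⟩
  obtain ⟨i, hi⟩ := hd₁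
  have hd₁i : d₁ i ≠ 0 := by
    obtain ⟨t, ht⟩ := exists_tridegree_ne_zero_of_mem hI
      (hspan ▸ Ideal.subset_span (Set.mem_insert _ _)) (hz.ne_zero_of_eq_span_pair hI hspan).1 h₁
    by_cases hti : t = i
    · exact hti ▸ ht
    · exact absurd (hi t hti) ht
  obtain ⟨j, k, hij, hik, hjk, h₁', h₂'⟩ := h₁.exists_shape i h₂ hi
    ((hz.tridegree_eq_zero_or h₁ h₂ hspan i).resolve_left hd₁i)
  exact ⟨F₁, F₂, i, j, k, _, _, _, hij, hik, hjk, h₁', h₂', hspan,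
    hz.isRegular_of_eq_span_pair hI hij hik h₁' h₂' hspan⟩

end HasDirectionFreeElements

section Lines

variable {A B C F G : ℕ → MvPolynomial (Fin 3 × Fin 2) K} {U U₃ U₂ U₁ : Finset (ℕ × ℕ)}

theorem ne_zero_of_forall_ne_smul (h : ∀ m n, m ≠ n → ∀ s : K, F m ≠ s • F n) (n : ℕ) :
    F n ≠ 0 := by
  simpa using h n (n + 1) n.succ_ne_self.symm 0

theorem idealPart_ne_top (hF : ∀ n, constantCoeff (F n) = 0) (hG : ∀ n, constantCoeff (G n) = 0)
    (hU : U.Nonempty) : idealPart F G U ≠ ⊤ := by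
  obtain ⟨p, hp⟩ := hU
  exact ne_top_of_le_ne_top (span_pair_ne_top_of_constantCoeff (hF p.1) (hG p.2)) (iInf₂_le p hp)

theorem lineIdeal_ne_top (hA : ∀ n, constantCoeff (A n) = 0) (hB : ∀ n, constantCoeff (B n) = 0)
    (hC : ∀ n, constantCoeff (C n) = 0) (hne : U₃.Nonempty ∨ U₂.Nonempty ∨ U₁.Nonempty) :
    lineIdeal A B C U₃ U₂ U₁ ≠ ⊤ := by
  rcases hne with hU | hU | hU
  · exact ne_top_of_le_ne_top (idealPart_ne_top hA hB hU) (inf_le_left.trans inf_le_left)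
  · exact ne_top_of_le_ne_top (idealPart_ne_top hA hC hU) (inf_le_left.trans inf_le_right)
  · exact ne_top_of_le_ne_top (idealPart_ne_top hB hC hU) inf_le_right

theorem exists_mem_idealPart {d e : Fin 3 → ℕ} (hF : ∀ n, TriHomogeneous (F n) d)
    (hG : ∀ n, TriHomogeneous (G n) e) (hF0 : ∀ n, F n ≠ 0) (hG0 : ∀ n, G n ≠ 0) {t : Fin 3}
    (hde : d t = 0 ∨ e t = 0) (U : Finset (ℕ × ℕ)) :
    ∃ z ∈ idealPart F G U, z ∈ nonzeroWeightZero (triWeight t) :=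
  Ideal.exists_mem_biInf_of_mem_submonoid U fun p _ => hde.elim
    (fun hd => ⟨F p.1, Ideal.subset_span (Set.mem_insert _ _),
      (hF p.1).mem_nonzeroWeightZero (hF0 p.1) hd⟩)
    (fun he => ⟨G p.2, Ideal.subset_span (Set.mem_insert_of_mem _ rfl),
      (hG p.2).mem_nonzeroWeightZero (hG0 p.2) he⟩)

theorem hasDirectionFreeElements_lineIdeal (hAdeg : ∀ n, TriHomogeneous (A n) ![1, 0, 0])
    (hBdeg : ∀ n, TriHomogeneous (B n) ![0, 1, 0]) (hCdeg : ∀ n, TriHomogeneous (C n) ![0, 0, 1])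
    (hA : ∀ n, A n ≠ 0) (hB : ∀ n, B n ≠ 0) (hC : ∀ n, C n ≠ 0) :
    HasDirectionFreeElements (lineIdeal A B C U₃ U₂ U₁) := by
  intro t
  refine Ideal.exists_mem_inf_of_mem_submonoid (Ideal.exists_mem_inf_of_mem_submonoid
    (exists_mem_idealPart hAdeg hBdeg hA hB ?_ U₃) (exists_mem_idealPart hAdeg hCdeg hA hC ?_ U₂))
    (exists_mem_idealPart hBdeg hCdeg hB hC ?_ U₁) <;> fin_cases t <;> simp

end Lines

/-- let `X` be a (nonempty) variety of lines of `ℙ¹×ℙ¹×ℙ¹`.  If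
`I_X = (F₁, F₂)` with `deg F₁ = a·e_i` and `deg F₂ = b·e_j + c·e_k`, `{i,j,k} = {1,2,3}`,
then `F₁, F₂` is a regular sequence; conversely, if `I_X` is generated by a regular
sequence of length 2 (of trihomogeneous elements), then the two generators have degrees
of this form. -/
theorem lineIdeal_complete_intersection
    (A B C : ℕ → MvPolynomial (Fin 3 × Fin 2) K)
    (hAdeg : ∀ n, TriHomogeneous (A n) ![1, 0, 0])
    (hBdeg : ∀ n, TriHomogeneous (B n) ![0, 1, 0])
    (hCdeg : ∀ n, TriHomogeneous (C n) ![0, 0, 1])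
    (hAind : ∀ m n, m ≠ n → ∀ s : K, A m ≠ s • A n)
    (hBind : ∀ m n, m ≠ n → ∀ s : K, B m ≠ s • B n)
    (hCind : ∀ m n, m ≠ n → ∀ s : K, C m ≠ s • C n)
    (U₃ U₂ U₁ : Finset (ℕ × ℕ))
    (hne : U₃.Nonempty ∨ U₂.Nonempty ∨ U₁.Nonempty) :
    (∀ F₁ F₂ : MvPolynomial (Fin 3 × Fin 2) K, ∀ i j k : Fin 3, ∀ a b c : ℕ,
        i ≠ j → i ≠ k → j ≠ k →
        TriHomogeneous F₁ (fun t => if t = i then a else 0) →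
        TriHomogeneous F₂ (fun t => if t = j then b else if t = k then c else 0) →
        lineIdeal A B C U₃ U₂ U₁ = Ideal.span {F₁, F₂} →
        RingTheory.Sequence.IsRegular (MvPolynomial (Fin 3 × Fin 2) K) [F₁, F₂]) ∧
    ((∃ F₁ F₂ : MvPolynomial (Fin 3 × Fin 2) K, (∃ d₁ d₂ : Fin 3 → ℕ,
          TriHomogeneous F₁ d₁ ∧ TriHomogeneous F₂ d₂) ∧
        lineIdeal A B C U₃ U₂ U₁ = Ideal.span {F₁, F₂} ∧
        RingTheory.Sequence.IsRegular (MvPolynomial (Fin 3 × Fin 2) K) [F₁, F₂]) →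
      ∃ F₁ F₂ : MvPolynomial (Fin 3 × Fin 2) K, ∃ i j k : Fin 3, ∃ a b c : ℕ,
        i ≠ j ∧ i ≠ k ∧ j ≠ k ∧
        TriHomogeneous F₁ (fun t => if t = i then a else 0) ∧
        TriHomogeneous F₂ (fun t => if t = j then b else if t = k then c else 0) ∧
        lineIdeal A B C U₃ U₂ U₁ = Ideal.span {F₁, F₂} ∧
        RingTheory.Sequence.IsRegular (MvPolynomial (Fin 3 × Fin 2) K) [F₁, F₂]) := by
  have hI : lineIdeal A B C U₃ U₂ U₁ ≠ ⊤ :=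
    lineIdeal_ne_top (fun n => (hAdeg n).constantCoeff_eq_zero (t := 0) one_ne_zero)
      (fun n => (hBdeg n).constantCoeff_eq_zero (t := 1) one_ne_zero)
      (fun n => (hCdeg n).constantCoeff_eq_zero (t := 2) one_ne_zero) hne
  have hz : HasDirectionFreeElements (lineIdeal A B C U₃ U₂ U₁) :=
    hasDirectionFreeElements_lineIdeal hAdeg hBdeg hCdeg
      (ne_zero_of_forall_ne_smul hAind) (ne_zero_of_forall_ne_smul hBind)
      (ne_zero_of_forall_ne_smul hCind)
  refine ⟨fun F₁ F₂ i j k a b c hij hik _ h₁ h₂ hspan =>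
    hz.isRegular_of_eq_span_pair hI hij hik h₁ h₂ hspan, ?_⟩
  rintro ⟨F₁, F₂, ⟨d₁, d₂, h₁, h₂⟩, hspan, -⟩
  exact hz.exists_shape_of_eq_span_pair hI h₁ h₂ hspan

end
end

section
/- In the monomial setting: the ideal J = (∏_{j∈[b]} b_j, ∏_{i∈[a]} a_i ∏_{k∈[c]} c_k) in K[a₁,…,a_a, b₁,…,b_b, c₁,…,c_c] is a complete intersection and equals ⋂_{i∈[a], j∈[b]} (a_i, b_j) ∩ ⋂_{j∈[b], k∈[c]} (b_j, c_k). -/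
/-!
Both generators are squarefree monomials, `∏ B` and `∏ (A ∪ C)`, in disjoint sets of
variables.
Membership in an ideal generated by monomials can be tested on each monomial of the support, so
the decomposition comes down to the distributive law
`(∀ y ∈ B, m y ≠ 0) ∨ (∀ z ∈ A ∪ C, m z ≠ 0) ↔
  ∀ y ∈ B, ∀ z ∈ A ∪ C, m y ≠ 0 ∨ m z ≠ 0`.
For regularity, a monomial is a nonzerodivisor, and if `xᵗ f ∈ (xˢ)` with `s` and `t`
supported on disjoint sets of variables then already `f ∈ (xˢ)`; the pair generates a proper
ideal since neither exponent is zero.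
-/

namespace MvPolynomial

variable {σ ι κ R : Type*}

section Exponents

variable [Fintype ι]

lemma sum_single_one_apply_self (v : ι ↪ σ) (i : ι) :
    (∑ j, Finsupp.single (v j) 1 : σ →₀ ℕ) (v i) = 1 := by
  rw [Finsupp.finsetSum_apply, Finset.sum_eq_single i (fun j _ hji => ?_) (by simp)]
  · simp
  · simp [v.injective.ne hji]

lemma sum_single_one_ne_zero [Nonempty ι] (v : ι ↪ σ) :
    ∑ i, Finsupp.single (v i) 1 ≠ 0 := fun h => by
  simpa [h] using sum_single_one_apply_self v (Classical.arbitrary ι)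

lemma sum_single_one_apply_of_notMem_range {v : ι → σ} {x : σ} (hx : x ∉ Set.range v) :
    (∑ j, Finsupp.single (v j) 1 : σ →₀ ℕ) x = 0 := by
  rw [Finsupp.finsetSum_apply]
  exact Finset.sum_eq_zero fun j _ => Finsupp.single_eq_of_ne fun h => hx ⟨j, h.symm⟩

lemma sum_single_one_le_iff (v : ι ↪ σ) (m : σ →₀ ℕ) :
    ∑ i, Finsupp.single (v i) 1 ≤ m ↔ ∀ i, m (v i) ≠ 0 := by
  refine ⟨fun h i => ?_, fun h x => ?_⟩
  · have := h (v i)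
    rw [sum_single_one_apply_self] at this
    omega
  · by_cases hx : x ∈ Set.range v
    · obtain ⟨i, rfl⟩ := hx
      rw [sum_single_one_apply_self]
      exact Nat.one_le_iff_ne_zero.mpr (h i)
    · rw [sum_single_one_apply_of_notMem_range hx]
      exact Nat.zero_le _

end Exponents

section CommSemiring

variable [CommSemiring R]

lemma prod_X_eq_monomial [Fintype ι] (v : ι → σ) :
    ∏ i, (X (v i) : MvPolynomial σ R) = monomial (∑ i, Finsupp.single (v i) 1) 1 :=
  (monomial_sum_one _ _).symm

lemma mem_span_singleton_monomial_one_iff {s : σ →₀ ℕ} {f : MvPolynomial σ R} :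
    f ∈ Ideal.span {monomial s 1} ↔ ∀ m ∈ f.support, s ≤ m := by
  rw [← Set.image_singleton (f := fun u => monomial u (1 : R)), mem_ideal_span_monomial_image]
  simp

lemma mem_span_pair_monomial_one_iff {s t : σ →₀ ℕ} {f : MvPolynomial σ R} :
    f ∈ Ideal.span {monomial s 1, monomial t 1} ↔ ∀ m ∈ f.support, s ≤ m ∨ t ≤ m := by
  rw [← Set.image_pair (fun u => monomial u (1 : R)), mem_ideal_span_monomial_image]
  simp

lemma mem_span_pair_X_iff {x y : σ} {f : MvPolynomial σ R} :
    f ∈ Ideal.span {X x, X y} ↔ ∀ m ∈ f.support, m x ≠ 0 ∨ m y ≠ 0 := by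
  rw [← Set.image_pair, mem_ideal_span_X_image]
  simp

lemma isSMulRegular_monomial_one (s : σ →₀ ℕ) :
    IsSMulRegular (MvPolynomial σ R) (monomial s (1 : R)) := fun p q hpq => by
  ext m
  simpa [coeff_monomial_mul] using congr(coeff (s + m) $hpq)

lemma one_notMem_span_pair_monomial_one [Nontrivial R] {s t : σ →₀ ℕ} (hs : s ≠ 0)
    (ht : t ≠ 0) :
    (1 : MvPolynomial σ R) ∉ Ideal.span {monomial s 1, monomial t 1} := by
  rw [mem_span_pair_monomial_one_iff]
  intro h
  have := h 0 (by simp)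
  simp_all [nonpos_iff_eq_zero]

theorem span_pair_prod_X_eq_iInf [Fintype ι] [Fintype κ] (v : ι ↪ σ) (w : κ ↪ σ) :
    Ideal.span {∏ i, (X (v i) : MvPolynomial σ R), ∏ k, X (w k)} =
      ⨅ (i) (k), Ideal.span {X (v i), X (w k)} := by
  ext f
  simp only [prod_X_eq_monomial, mem_span_pair_monomial_one_iff, sum_single_one_le_iff,
    Submodule.mem_iInf, mem_span_pair_X_iff, ← forall_or_left, ← forall_or_right]
  exact ⟨fun h i k m hm => h m hm k i, fun h m hm k i => h i k m hm⟩

end CommSemiring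

section CommRing

variable [CommRing R] {s t : σ →₀ ℕ}

lemma isSMulRegular_quotSMulTop_monomial (hst : Disjoint s.support t.support) :
    IsSMulRegular (QuotSMulTop (monomial s (1 : R)) (MvPolynomial σ R)) (monomial t (1 : R)) := by
  rw [isSMulRegular_quotient_iff_mem_of_smul_mem]
  intro f htf
  rw [← Submodule.ideal_span_singleton_smul, Ideal.smul_eq_mul, Ideal.mul_top,
    mem_span_singleton_monomial_one_iff] at htf ⊢
  intro m hm
  have hle : s ≤ t + m := htf (t + m) <| by
    rwa [mem_support_iff, smul_eq_mul, coeff_monomial_mul, one_mul, ← mem_support_iff]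
  intro x
  by_cases hx : x ∈ s.support
  · have := hle x
    rw [Finsupp.add_apply, Finsupp.notMem_support_iff.mp (hst.notMem_of_mem_left_finset hx),
      zero_add] at this
    exact this
  · simp [Finsupp.notMem_support_iff.mp hx]

theorem isRegular_monomial_pair [Nontrivial R] (hs : s ≠ 0) (ht : t ≠ 0)
    (hst : Disjoint s.support t.support) :
    RingTheory.Sequence.IsRegular (MvPolynomial σ R) [monomial s (1 : R), monomial t 1] := by
  refine (RingTheory.Sequence.isRegular_iff _ _).mpr ⟨?_, ?_⟩
  · refine .cons ?_ (.cons (isSMulRegular_quotSMulTop_monomial hst) (.nil _ _))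
    exact isSMulRegular_monomial_one s
  · rw [Ideal.ofList_cons, Ideal.ofList_singleton, ← Ideal.span_insert, Ideal.smul_eq_mul,
      Ideal.mul_top, ne_comm, Ne, Ideal.eq_top_iff_one]
    exact one_notMem_span_pair_monomial_one hs ht

theorem isRegular_pair_prod_X [Nontrivial R] [Fintype ι] [Fintype κ] [Nonempty ι] [Nonempty κ]
    (v : ι ↪ σ) (w : κ ↪ σ) (hvw : ∀ i k, v i ≠ w k) :
    RingTheory.Sequence.IsRegular (MvPolynomial σ R)
      [∏ i, (X (v i) : MvPolynomial σ R), ∏ k, X (w k)] := by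
  rw [prod_X_eq_monomial, prod_X_eq_monomial]
  refine isRegular_monomial_pair (sum_single_one_ne_zero v) (sum_single_one_ne_zero w)
    (Finset.disjoint_left.mpr fun x hx hx' => ?_)
  rw [Finsupp.mem_support_iff] at hx hx'
  obtain ⟨i, rfl⟩ : x ∈ Set.range v := not_imp_comm.mp sum_single_one_apply_of_notMem_range hx
  exact hx' (sum_single_one_apply_of_notMem_range fun ⟨k, hk⟩ => hvw i k hk.symm)

end CommRing

end MvPolynomial

open MvPolynomial

theorem monomial_complete_intersection_of_lines_general (K : Type*) [Field K] (a b c : ℕ)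
    (ha : 0 < a) (hb : 0 < b) :
    RingTheory.Sequence.IsRegular (MvPolynomial (Fin a ⊕ Fin b ⊕ Fin c) K)
      [(∏ j : Fin b, X (Sum.inr (Sum.inl j)) : MvPolynomial (Fin a ⊕ Fin b ⊕ Fin c) K),
        (∏ i : Fin a, X (Sum.inl i)) * ∏ k : Fin c, X (Sum.inr (Sum.inr k))] ∧
    Ideal.span
        {(∏ j : Fin b, X (Sum.inr (Sum.inl j)) : MvPolynomial (Fin a ⊕ Fin b ⊕ Fin c) K),
          (∏ i : Fin a, X (Sum.inl i)) * ∏ k : Fin c, X (Sum.inr (Sum.inr k))} =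
      (⨅ (i : Fin a) (j : Fin b),
          Ideal.span {(X (Sum.inl i) : MvPolynomial (Fin a ⊕ Fin b ⊕ Fin c) K),
            X (Sum.inr (Sum.inl j))}) ⊓
        (⨅ (j : Fin b) (k : Fin c),
          Ideal.span {(X (Sum.inr (Sum.inl j)) : MvPolynomial (Fin a ⊕ Fin b ⊕ Fin c) K),
            X (Sum.inr (Sum.inr k))}) := by
  let varsB : Fin b ↪ Fin a ⊕ Fin b ⊕ Fin c := Function.Embedding.inl.trans .inr
  let varsAC : Fin a ⊕ Fin c ↪ Fin a ⊕ Fin b ⊕ Fin c := .sumMap (.refl _) .inr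
  have hAC : (∏ i : Fin a, X (Sum.inl i)) * ∏ k : Fin c, X (Sum.inr (Sum.inr k)) =
      ∏ x, (X (varsAC x) : MvPolynomial (Fin a ⊕ Fin b ⊕ Fin c) K) := by
    rw [Fintype.prod_sum_type]; rfl
  have : Nonempty (Fin a) := Fin.pos_iff_nonempty.mp ha
  have : Nonempty (Fin b) := Fin.pos_iff_nonempty.mp hb
  rw [hAC]
  refine ⟨isRegular_pair_prod_X varsB varsAC ?_, ?_⟩
  · rintro j (i | k) <;> simp [varsB, varsAC]
  · refine (span_pair_prod_X_eq_iInf varsB varsAC).trans ?_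
    simp only [iInf_sum, iInf_inf_eq]
    rw [iInf_comm (ι := Fin b)]
    simp [varsB, varsAC, Set.pair_comm]

/-- monomial setting: in `K[a₁,…,a_a, b₁,…,b_b, c₁,…,c_c]`, the ideal
`J = (∏_j b_j, ∏_i a_i ∏_k c_k)` is a complete intersection (its two generators form a
regular sequence) and equals `⋂_{i,j} (a_i, b_j) ∩ ⋂_{j,k} (b_j, c_k)`. -/
theorem monomial_complete_intersection_of_lines (K : Type*) [Field K] (a b c : ℕ)
    (ha : 0 < a) (hb : 0 < b) (hc : 0 < c) :
    RingTheory.Sequence.IsRegular (MvPolynomial (Fin a ⊕ Fin b ⊕ Fin c) K)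
      [(∏ j : Fin b, X (Sum.inr (Sum.inl j)) : MvPolynomial (Fin a ⊕ Fin b ⊕ Fin c) K),
        (∏ i : Fin a, X (Sum.inl i)) * ∏ k : Fin c, X (Sum.inr (Sum.inr k))] ∧
    Ideal.span
        {(∏ j : Fin b, X (Sum.inr (Sum.inl j)) : MvPolynomial (Fin a ⊕ Fin b ⊕ Fin c) K),
          (∏ i : Fin a, X (Sum.inl i)) * ∏ k : Fin c, X (Sum.inr (Sum.inr k))} =
      (⨅ (i : Fin a) (j : Fin b),
          Ideal.span {(X (Sum.inl i) : MvPolynomial (Fin a ⊕ Fin b ⊕ Fin c) K),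
            X (Sum.inr (Sum.inl j))}) ⊓
        (⨅ (j : Fin b) (k : Fin c),
          Ideal.span {(X (Sum.inr (Sum.inl j)) : MvPolynomial (Fin a ⊕ Fin b ⊕ Fin c) K),
            X (Sum.inr (Sum.inr k))}) :=
  monomial_complete_intersection_of_lines_general K a b c ha hb
end
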